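/- arXiv:1505.01379 — 8 statements merged into one kernel-verified Lean document; each statement's English description precedes it below -/
import Mathlib

section
/- Let κ be a field and P(X,Y) ∈ κ[X,Y] a polynomial with P(0,0) = 0 and ∂P/∂Y(0,0) = 0. Let f(X) = Σ_{n≥1} f_n X^n ∈ κ[[X]] be a formal power series with zero constant term satisfying f(X) = P(X, f(X)). Then for every n ≥ 1, the family of coefficients c_m := [X^n Y^{m-1}] ((1 − ∂P/∂Y(X,Y)) · P(X,Y)^m), indexed by m ≥ 1, has finite support, and f_n = Σ_{m≥1} [X^n Y^{m-1}] ((1 − ∂P/∂Y(X,Y)) · P(X,Y)^m). -/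
/-!
Embed `κ⟦X⟧[Y]` into the field of Hahn series over `ℤ ×ₗ ℤ` by `X ^ a * Y ^ b ↦ t ^ (2a + b, b)`.
Since `P(0, 0) = P_Y(0, 0) = 0`, all exponents of `z = P / Y` have weight `2a + b ≥ 1`, so `z`
is topologically nilpotent, and `[X^n Y^(m-1)] (1 - P_Y) P^m` is the coefficient of
`X^n Y⁻¹` in `(1 - P_Y) z^m`; since this term has weight at least `m`, it vanishes for
`m ≥ 2n`. Summing over `m`, the series is the `X^n Y⁻¹` coefficient of `(1 - P_Y) z / (1 - z)`.
Dividing `Y - P` by `Y - f` gives `Y - P = (Y - f) U` with `U(0, 0) = 1`, and then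
`(1 - P_Y) z / (1 - z) = Y / (Y - f) + Y U_Y / U - (1 - P_Y)`. The last two terms contain only
nonnegative powers of `Y`, while `Y / (Y - f) = ∑ (f / Y)^k` contributes exactly `f_n`.
-/

open Polynomial hiding constantCoeff
open PowerSeries (coeff constantCoeff)

namespace FlajoletSoria

open HahnSeries hiding C

theorem finsum_one_le_eq_finsum_succ {M : Type*} [AddCommMonoid M] (c : ℕ → M) :
    ∑ᶠ (m : ℕ) (_ : 1 ≤ m), c m = ∑ᶠ k, c (k + 1) := by
  rw [← finsum_mem_range Nat.succ_injective, Nat.range_succ]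
  rfl

/-- `(1 - p') / (y - p) = 1 / (y - τ) + u' / u` is the logarithmic derivative of
`y - p = (y - τ) u`; multiply by `p = y - (y - p)`. -/
theorem mul_div_one_sub_eq_of_factorization {K : Type*} [Field K] {y p p' τ u u' : K}
    (hy : y ≠ 0) (hyτ : y - τ ≠ 0) (hu : u ≠ 0) (hfac : y - p = (y - τ) * u)
    (hfac' : 1 - p' = u + (y - τ) * u') :
    (1 - p') * (p * y⁻¹) * (1 - p * y⁻¹)⁻¹ = (1 - τ * y⁻¹)⁻¹ + y * u' * u⁻¹ - (1 - p') := by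
  obtain rfl : p = y - (y - τ) * u := by rw [← hfac, sub_sub_cancel]
  have e1 : 1 - (y - (y - τ) * u) * y⁻¹ = (y - τ) * u * y⁻¹ := by field_simp; ring
  have e2 : 1 - τ * y⁻¹ = (y - τ) * y⁻¹ := by field_simp
  rw [e1, e2, hfac']
  field_simp

theorem exists_X_sub_C_mul_eq_X_sub {R : Type*} [CommRing R] (P : (PowerSeries R)[X])
    (hP1 : constantCoeff (P.coeff 1) = 0) {f : PowerSeries R} (hf0 : constantCoeff f = 0)
    (hf : P.eval f = f) :
    ∃ U : (PowerSeries R)[X], (X - C f) * U = X - P ∧ constantCoeff (U.coeff 0) = 1 := by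
  have hfac := mul_divByMonic_eq_iff_isRoot.mpr (show (X - P).IsRoot f by simp [hf])
  refine ⟨_, hfac, ?_⟩
  simpa [sub_mul, coeff_C_mul, hf0, hP1] using congrArg (fun Q ↦ constantCoeff (Q.coeff 1)) hfac

theorem coeff_coeff_map_coe {R : Type*} [CommSemiring R] (A : (Polynomial R)[X]) (a b : ℕ) :
    coeff a ((A.map coeToPowerSeries.ringHom).coeff b) = (A.coeff b).coeff a := by
  rw [coeff_map, coeToPowerSeries.ringHom_apply, coeff_coe]

section SupportGE

variable {Γ R : Type*} [AddCommMonoid Γ] [PartialOrder Γ]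

def SupportGE [Zero R] (φ : Γ →+ ℤ) (r : ℤ) (x : HahnSeries Γ R) : Prop :=
  ∀ g ∈ x.support, r ≤ φ g

variable {φ : Γ →+ ℤ} {r s : ℤ}

theorem SupportGE.coeff_eq_zero [Zero R] {x : HahnSeries Γ R} (hx : SupportGE φ r x) {g : Γ}
    (hg : φ g < r) : x.coeff g = 0 :=
  by_contra fun h ↦ (hx g h).not_gt hg

theorem SupportGE.mono [Zero R] {x : HahnSeries Γ R} (hx : SupportGE φ r x) (hsr : s ≤ r) :
    SupportGE φ s x :=
  fun g hg ↦ hsr.trans (hx g hg)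

theorem supportGE_single [Zero R] {g : Γ} {c : R} (hg : r ≤ φ g) : SupportGE φ r (single g c) :=
  fun _ h ↦ (Set.mem_singleton_iff.mp (support_single_subset h)) ▸ hg

theorem SupportGE.add [AddMonoid R] {x y : HahnSeries Γ R} (hx : SupportGE φ r x)
    (hy : SupportGE φ r y) : SupportGE φ r (x + y) :=
  fun g hg ↦ (support_add_subset x y hg).elim (hx g) (hy g)

theorem SupportGE.neg [AddGroup R] {x : HahnSeries Γ R} (hx : SupportGE φ r x) :
    SupportGE φ r (-x) :=
  fun g hg ↦ hx g (support_neg_subset x hg)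

theorem SupportGE.sub [AddGroup R] {x y : HahnSeries Γ R} (hx : SupportGE φ r x)
    (hy : SupportGE φ r y) : SupportGE φ r (x - y) :=
  sub_eq_add_neg x y ▸ hx.add hy.neg

theorem SupportGE.hsum [AddCommMonoid R] {α : Type*} {t : SummableFamily Γ R α}
    (ht : ∀ i, SupportGE φ r (t i)) : SupportGE φ r t.hsum := by
  intro g hg
  by_contra hlt
  refine hg ?_
  rw [SummableFamily.coeff_hsum]
  exact finsum_eq_zero_of_forall_eq_zero fun i ↦ (ht i).coeff_eq_zero (not_le.mp hlt)

theorem supportGE_one [Semiring R] : SupportGE φ 0 (1 : HahnSeries Γ R) :=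
  supportGE_single (by simp)

variable [IsOrderedCancelAddMonoid Γ] [Semiring R] {x y : HahnSeries Γ R}

theorem SupportGE.mul (hx : SupportGE φ r x) (hy : SupportGE φ s y) :
    SupportGE φ (r + s) (x * y) := by
  intro g hg
  obtain ⟨i, hi, j, hj, rfl⟩ := support_mul_subset hg
  simpa using add_le_add (hx i hi) (hy j hj)

theorem SupportGE.pow (hx : SupportGE φ r x) (k : ℕ) : SupportGE φ (k * r) (x ^ k) := by
  induction k with
  | zero => simpa using supportGE_one
  | succ k ih => simpa [pow_succ, add_mul] using ih.mul hx

end SupportGE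

section Inverse

variable {Γ K : Type*} [AddCommGroup Γ] [LinearOrder Γ] [IsOrderedAddMonoid Γ] [Field K]
  {w : HahnSeries Γ K}

theorem inv_one_sub_eq_hsum_powers (hw : 0 < w.orderTop) :
    (1 - w)⁻¹ = (SummableFamily.powers w).hsum :=
  inv_eq_of_mul_eq_one_right (SummableFamily.one_sub_self_mul_hsum_powers hw)

theorem one_sub_ne_zero_of_orderTop_pos (hw : 0 < w.orderTop) : 1 - w ≠ 0 :=
  (isUnit_of_orderTop_pos (by rwa [sub_sub_cancel_left, orderTop_neg])).ne_zero

theorem coeff_mul_inv_one_sub (hw : 0 < w.orderTop) (a : HahnSeries Γ K) (g : Γ) :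
    (a * (1 - w)⁻¹).coeff g = ∑ᶠ k, (a * w ^ k).coeff g := by
  rw [inv_one_sub_eq_hsum_powers hw, ← SummableFamily.hsum_smul, SummableFamily.coeff_hsum]
  simp [SummableFamily.powers_of_orderTop_pos hw, of_symm_smul_of_eq_mul]

theorem SupportGE.inv_one_sub {φ : Γ →+ ℤ} (hw : 0 < w.orderTop) (hφ : SupportGE φ 0 w) :
    SupportGE φ 0 (1 - w)⁻¹ := by
  rw [inv_one_sub_eq_hsum_powers hw]
  exact SupportGE.hsum fun k ↦ by simpa [SummableFamily.powers_of_orderTop_pos hw] using hφ.pow k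

end Inverse

/-- The exponent of `X ^ a * Y ^ b`. Ordering first by the weight `2a + b` makes `P / Y`
topologically nilpotent; the second coordinate records the degree in `Y`. -/
def exponent : ℕ × ℕ →+ ℤ ×ₗ ℤ where
  toFun e := toLex (2 * e.1 + e.2, e.2)
  map_zero' := rfl
  map_add' e e' := by
    rw [← toLex_add]
    congr 1
    ext
    · simp only [Prod.fst_add, Prod.snd_add, Nat.cast_add]
      ring
    · simp

theorem exponent_apply (a b : ℕ) : exponent (a, b) = toLex (2 * (a : ℤ) + b, (b : ℤ)) :=
  rfl

def weight : ℤ ×ₗ ℤ →+ ℤ := (AddMonoidHom.fst ℤ ℤ).comp (ofLexAddEquiv _).toAddMonoidHom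

def degY : ℤ ×ₗ ℤ →+ ℤ := (AddMonoidHom.snd ℤ ℤ).comp (ofLexAddEquiv _).toAddMonoidHom

@[simp] theorem weight_exponent (a b : ℕ) : weight (exponent (a, b)) = 2 * a + b := rfl

@[simp] theorem degY_exponent (a b : ℕ) : degY (exponent (a, b)) = b := rfl

theorem exponent_injective : Function.Injective exponent := by
  rintro ⟨a, b⟩ ⟨a', b'⟩ h
  have h₁ := congrArg weight h
  have h₂ := congrArg degY h
  simp only [weight_exponent, degY_exponent] at h₁ h₂
  ext <;> omega

variable {κ : Type*} [Field κ]

theorem SupportGE.orderTop_pos {x : HahnSeries (ℤ ×ₗ ℤ) κ} (hx : SupportGE weight 1 x) :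
    0 < x.orderTop := by
  rcases eq_or_ne x 0 with rfl | hne
  · simp
  · rw [orderTop_of_ne_zero hne, WithTop.coe_pos]
    exact Prod.Lex.lt_iff.mpr (Or.inl (hx _ (x.isWF_support.min_mem (support_nonempty_iff.2 hne))))

noncomputable def embX : PowerSeries κ →+* HahnSeries (ℤ ×ₗ ℤ) κ :=
  (embDomainRingHom (exponent.comp (AddMonoidHom.inl ℕ ℕ))
    (exponent_injective.comp (Prod.mk_left_injective 0)) fun a a' ↦ by
      simp only [AddMonoidHom.coe_comp, Function.comp_apply, AddMonoidHom.inl_apply,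
        exponent_apply, Prod.Lex.toLex_le_toLex]
      omega).comp toPowerSeries.symm.toRingHom

theorem coeff_embX_exponent (F : PowerSeries κ) (a : ℕ) :
    (embX F).coeff (exponent (a, 0)) = coeff a F :=
  embDomain_coeff

theorem support_embX (F : PowerSeries κ) :
    (embX F).support ⊆ Set.range fun a ↦ exponent (a, 0) :=
  support_embDomain_subset.trans (Set.image_subset_range _ _)

theorem coeff_embX_of_degY_ne_zero (F : PowerSeries κ) {g : ℤ ×ₗ ℤ} (hg : degY g ≠ 0) :
    (embX F).coeff g = 0 := by
  by_contra h
  obtain ⟨a, rfl⟩ := support_embX F h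
  simp at hg

noncomputable def varY : HahnSeries (ℤ ×ₗ ℤ) κ := single (exponent (0, 1)) 1

theorem varY_ne_zero : (varY : HahnSeries (ℤ ×ₗ ℤ) κ) ≠ 0 :=
  single_ne_zero one_ne_zero

theorem varY_pow (b : ℕ) : (varY : HahnSeries (ℤ ×ₗ ℤ) κ) ^ b = single (exponent (0, b)) 1 := by
  rw [varY, single_pow, one_pow, ← map_nsmul, Prod.smul_mk, smul_zero, smul_eq_mul, mul_one]

theorem varY_inv_pow (b : ℕ) :
    (varY : HahnSeries (ℤ ×ₗ ℤ) κ)⁻¹ ^ b = single (-exponent (0, b)) 1 := by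
  rw [inv_pow, varY_pow, inv_single, inv_one]

theorem supportGE_varY (φ : ℤ ×ₗ ℤ →+ ℤ) :
    SupportGE φ (φ (exponent (0, 1))) (varY : HahnSeries (ℤ ×ₗ ℤ) κ) :=
  supportGE_single le_rfl

theorem supportGE_varY_inv (φ : ℤ ×ₗ ℤ →+ ℤ) :
    SupportGE φ (-φ (exponent (0, 1))) (varY : HahnSeries (ℤ ×ₗ ℤ) κ)⁻¹ := by
  rw [← pow_one varY⁻¹, varY_inv_pow]
  exact supportGE_single (map_neg φ _).ge

noncomputable def embXY : (PowerSeries κ)[X] →+* HahnSeries (ℤ ×ₗ ℤ) κ := eval₂RingHom embX varY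

theorem embXY_X : embXY (X : (PowerSeries κ)[X]) = varY := eval₂_X _ _

theorem coeff_embXY (A : (PowerSeries κ)[X]) (g : ℤ ×ₗ ℤ) :
    (embXY A).coeff g = ∑ b ∈ A.support, (embX (A.coeff b)).coeff (g - exponent (0, b)) := by
  rw [embXY, coe_eval₂RingHom, eval₂_eq_sum, Polynomial.sum, HahnSeries.coeff_sum]
  refine Finset.sum_congr rfl fun b _ ↦ ?_
  conv_lhs => rw [← sub_add_cancel g (exponent (0, b))]
  rw [varY_pow, coeff_mul_single_add, mul_one]

theorem coeff_embXY_exponent (A : (PowerSeries κ)[X]) (a b : ℕ) :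
    (embXY A).coeff (exponent (a, b)) = coeff a (A.coeff b) := by
  rw [coeff_embXY, Finset.sum_eq_single b]
  · rw [sub_eq_of_eq_add (by rw [← map_add, Prod.mk_add_mk, add_zero, zero_add]),
      coeff_embX_exponent]
  · intro b' _ hb'
    refine coeff_embX_of_degY_ne_zero _ ?_
    simp
    omega
  · intro hb
    rw [notMem_support_iff.mp hb, map_zero, HahnSeries.coeff_zero]

theorem supportGE_embXY {φ : ℤ ×ₗ ℤ →+ ℤ} {r : ℤ} (A : (PowerSeries κ)[X])
    (h : ∀ a b, coeff a (A.coeff b) ≠ 0 → r ≤ φ (exponent (a, b))) :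
    SupportGE φ r (embXY A) := by
  intro g hg
  rw [HahnSeries.mem_support, coeff_embXY] at hg
  obtain ⟨b, -, hb⟩ := Finset.exists_ne_zero_of_sum_ne_zero hg
  obtain ⟨a, ha : exponent (a, 0) = g - exponent (0, b)⟩ := support_embX _ hb
  rw [← ha, coeff_embX_exponent] at hb
  have hg : g = exponent (a, b) := by
    rw [sub_eq_iff_eq_add.mp ha.symm, ← map_add, Prod.mk_add_mk, add_zero, zero_add]
  exact hg ▸ h a b hb

theorem supportGE_degY_embXY (A : (PowerSeries κ)[X]) : SupportGE degY 0 (embXY A) :=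
  supportGE_embXY A fun a b _ ↦ by simp

theorem supportGE_weight_embXY_mul_varY_inv (P : (PowerSeries κ)[X])
    (hP0 : constantCoeff (P.coeff 0) = 0) (hP1 : constantCoeff (P.coeff 1) = 0) :
    SupportGE weight 1 (embXY P * varY⁻¹) := by
  have hP : SupportGE weight 2 (embXY P) := supportGE_embXY P fun a b hab ↦ by
    rcases Nat.eq_zero_or_pos a with rfl | ha
    · obtain rfl | rfl | hb : b = 0 ∨ b = 1 ∨ 2 ≤ b := by omega
      exacts [(hab (by rwa [PowerSeries.coeff_zero_eq_constantCoeff_apply])).elim,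
        (hab (by rwa [PowerSeries.coeff_zero_eq_constantCoeff_apply])).elim, by simpa using hb]
    · simp
      omega
  exact (hP.mul (supportGE_varY_inv weight)).mono (by simp)

theorem supportGE_weight_one_sub_embXY {U : (PowerSeries κ)[X]}
    (hU : constantCoeff (U.coeff 0) = 1) : SupportGE weight 1 (1 - embXY U) := by
  rw [← map_one embXY, ← map_sub]
  refine supportGE_embXY _ fun a b hab ↦ ?_
  by_contra hlt
  obtain ⟨rfl, rfl⟩ : a = 0 ∧ b = 0 := by simp at hlt; omega
  apply hab
  rw [Polynomial.coeff_sub, coeff_one_zero, PowerSeries.coeff_zero_eq_constantCoeff_apply,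
    map_sub, map_one, hU, sub_self]

def residueExponent (n : ℕ) : ℤ ×ₗ ℤ := exponent (n, 0) - exponent (0, 1)

@[simp] theorem weight_residueExponent (n : ℕ) : weight (residueExponent n) = 2 * n - 1 := by
  simp [residueExponent]

@[simp] theorem degY_residueExponent (n : ℕ) : degY (residueExponent n) = -1 := by
  simp [residueExponent]

theorem coeff_embXY_mul_varY_inv_pow (A : (PowerSeries κ)[X]) (n m : ℕ) :
    (embXY A * varY⁻¹ ^ (m + 1)).coeff (residueExponent n) = coeff n (A.coeff m) := by
  have h : residueExponent n = exponent (n, m) + -exponent (0, m + 1) := by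
    rw [residueExponent, ← sub_eq_add_neg, sub_eq_sub_iff_add_eq_add, ← map_add, ← map_add]
    simp
  rw [varY_inv_pow, h, coeff_mul_single_add, mul_one, coeff_embXY_exponent]

theorem coeff_one_sub_derivative_mul_pow_eq_zero (P : (PowerSeries κ)[X])
    (hP0 : constantCoeff (P.coeff 0) = 0) (hP1 : constantCoeff (P.coeff 1) = 0) {n m : ℕ}
    (hnm : 2 * n ≤ m + 1) : coeff n (((1 - derivative P) * P ^ (m + 1)).coeff m) = 0 := by
  have hP' : SupportGE weight 0 (1 - embXY (derivative P)) :=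
    supportGE_one.sub (supportGE_embXY _ fun _ _ _ ↦ by simp; positivity)
  rw [← coeff_embXY_mul_varY_inv_pow, map_mul, map_pow, map_sub, map_one, mul_assoc, ← mul_pow]
  refine SupportGE.coeff_eq_zero (φ := weight) (r := m + 1) ?_ (by simp; omega)
  simpa using hP'.mul ((supportGE_weight_embXY_mul_varY_inv P hP0 hP1).pow (m + 1))

theorem finite_setOf_coeff_one_sub_derivative_mul_pow_ne_zero (P : (PowerSeries κ)[X])
    (hP0 : constantCoeff (P.coeff 0) = 0) (hP1 : constantCoeff (P.coeff 1) = 0) (n : ℕ) :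
    {m : ℕ | 1 ≤ m ∧ coeff n (((1 - derivative P) * P ^ m).coeff (m - 1)) ≠ 0}.Finite := by
  refine (Set.finite_Iio (2 * n)).subset fun m ⟨hm, hne⟩ ↦ ?_
  obtain ⟨k, rfl⟩ := Nat.exists_eq_add_of_le' hm
  by_contra hlt
  exact hne (coeff_one_sub_derivative_mul_pow_eq_zero P hP0 hP1 (by simp at hlt; omega))

theorem coeff_residueExponent_eq_finsum (P : (PowerSeries κ)[X])
    (hP0 : constantCoeff (P.coeff 0) = 0) (hP1 : constantCoeff (P.coeff 1) = 0) (n : ℕ) :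
    ((1 - embXY (derivative P)) * (embXY P * varY⁻¹) * (1 - embXY P * varY⁻¹)⁻¹).coeff
        (residueExponent n) =
      ∑ᶠ (m : ℕ) (_ : 1 ≤ m), coeff n (((1 - derivative P) * P ^ m).coeff (m - 1)) := by
  rw [coeff_mul_inv_one_sub (supportGE_weight_embXY_mul_varY_inv P hP0 hP1).orderTop_pos,
    finsum_one_le_eq_finsum_succ]
  refine finsum_congr fun k ↦ ?_
  rw [← coeff_embXY_mul_varY_inv_pow, Nat.succ_sub_one, map_mul, map_pow, map_sub, map_one,
    mul_pow, pow_succ']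
  ring_nf

theorem coeff_residueExponent_inv_one_sub_embXY_C {f : PowerSeries κ} (hf0 : constantCoeff f = 0)
    (n : ℕ) : ((1 - embXY (C f) * varY⁻¹)⁻¹).coeff (residueExponent n) = coeff n f := by
  have hdegY : SupportGE degY (-1) (embXY (C f) * varY⁻¹) :=
    ((supportGE_degY_embXY _).mul (supportGE_varY_inv degY)).mono (by simp)
  have hdegY' : SupportGE (-degY) 1 (embXY (C f) * varY⁻¹) := by
    refine ((supportGE_embXY (r := 0) _ fun a b hab ↦ ?_).mul
      (supportGE_varY_inv (-degY))).mono (by simp)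
    obtain rfl : b = 0 := by
      by_contra hb
      simp [Polynomial.coeff_C, hb] at hab
    simp
  rw [← one_mul (1 - _)⁻¹, coeff_mul_inv_one_sub
      (supportGE_weight_embXY_mul_varY_inv (C f) (by simpa) (by simp)).orderTop_pos,
    finsum_eq_single _ 1]
  · simpa using coeff_embXY_mul_varY_inv_pow (C f) n 0
  · intro k hk
    rw [one_mul]
    rcases Nat.lt_or_gt_of_ne hk with hk | hk
    · exact (hdegY.pow k).coeff_eq_zero (by simp; omega)
    · exact (hdegY'.pow k).coeff_eq_zero (by simp; omega)

theorem coeff_residueExponent_eq_coeff_of_eval_eq (P : (PowerSeries κ)[X])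
    (hP1 : constantCoeff (P.coeff 1) = 0) {f : PowerSeries κ} (hf0 : constantCoeff f = 0)
    (hf : P.eval f = f) (n : ℕ) :
    ((1 - embXY (derivative P)) * (embXY P * varY⁻¹) * (1 - embXY P * varY⁻¹)⁻¹).coeff
      (residueExponent n) = coeff n f := by
  obtain ⟨U, hfac, hU⟩ := exists_X_sub_C_mul_eq_X_sub P hP1 hf0 hf
  have hfac' : 1 - derivative P = U + (X - C f) * derivative U := by
    have h := congrArg derivative hfac
    rw [derivative_mul, derivative_sub, derivative_X, derivative_C, sub_zero, one_mul,
      derivative_sub, derivative_X] at h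
    exact h.symm
  have hw := supportGE_weight_one_sub_embXY hU
  have hu : embXY U = 1 - (1 - embXY U) := (sub_sub_cancel _ _).symm
  have hyτ : varY - embXY (C f) ≠ 0 := fun h ↦ by
    simpa [varY, coeff_embXY_exponent] using congrArg (·.coeff (exponent (0, 1))) h
  have hF1 : varY - embXY P = (varY - embXY (C f)) * embXY U := by
    rw [← embXY_X, ← map_sub, ← map_sub, ← map_mul, hfac]
  have hF2 : 1 - embXY (derivative P) = embXY U + (varY - embXY (C f)) * embXY (derivative U) := by
    rw [← embXY_X, ← map_sub, ← map_one embXY, ← map_sub, ← map_mul, ← map_add, hfac']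
  have hUinv : SupportGE degY 0 (embXY U)⁻¹ := by
    rw [hu]
    exact (supportGE_one.sub (supportGE_degY_embXY U)).inv_one_sub hw.orderTop_pos
  have hlogDeriv : SupportGE degY 1 (varY * embXY (derivative U) * (embXY U)⁻¹) :=
    (((supportGE_varY degY).mul (supportGE_degY_embXY _)).mul hUinv).mono (by simp)
  have hpoly : SupportGE degY 0 (1 - embXY (derivative P)) :=
    supportGE_one.sub (supportGE_degY_embXY _)
  rw [mul_div_one_sub_eq_of_factorization varY_ne_zero hyτ
      (hu ▸ one_sub_ne_zero_of_orderTop_pos hw.orderTop_pos) hF1 hF2,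
    HahnSeries.coeff_sub, HahnSeries.coeff_add, coeff_residueExponent_inv_one_sub_embXY_C hf0,
    hlogDeriv.coeff_eq_zero (by simp), hpoly.coeff_eq_zero (by simp), add_zero, sub_zero]

theorem coeff_eq_finsum_of_eval_eq (P : (PowerSeries κ)[X])
    (hP0 : constantCoeff (P.coeff 0) = 0) (hP1 : constantCoeff (P.coeff 1) = 0)
    {f : PowerSeries κ} (hf0 : constantCoeff f = 0) (hf : P.eval f = f) (n : ℕ) :
    coeff n f = ∑ᶠ (m : ℕ) (_ : 1 ≤ m), coeff n (((1 - derivative P) * P ^ m).coeff (m - 1)) := by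
  rw [← coeff_residueExponent_eq_coeff_of_eval_eq P hP1 hf0 hf,
    coeff_residueExponent_eq_finsum P hP0 hP1]

end FlajoletSoria

/-- **Generalized Flajolet–Soria formula** (Theorem 6 of the paper).
A two-variable polynomial `P(X,Y)` over a field `κ` is encoded as an element of
`(κ[X])[Y]`, i.e. `Polynomial (Polynomial κ)` whose outer variable is `Y`.
The coefficient `[X^n Y^m] A` is `(A.coeff m).coeff n`, and `∂P/∂Y` is
`Polynomial.derivative P`. -/
theorem flajolet_soria_general (κ : Type*) [Field κ]
    (P : Polynomial (Polynomial κ))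
    (hP00 : (P.eval 0).eval 0 = 0)
    (hPY00 : ((Polynomial.derivative P).eval 0).eval 0 = 0)
    (f : PowerSeries κ)
    (hf0 : PowerSeries.constantCoeff f = 0)
    (hf : Polynomial.eval₂ Polynomial.coeToPowerSeries.ringHom f P = f) :
    ∀ n : ℕ, 1 ≤ n →
      {m : ℕ | 1 ≤ m ∧
          (((1 - Polynomial.derivative P) * P ^ m).coeff (m - 1)).coeff n ≠ 0}.Finite ∧
      PowerSeries.coeff n f =
        ∑ᶠ (m : ℕ) (_ : 1 ≤ m),
          (((1 - Polynomial.derivative P) * P ^ m).coeff (m - 1)).coeff n := by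
  intro n _
  set Q := P.map coeToPowerSeries.ringHom
  have hQ : ∀ m k, PowerSeries.coeff n (((1 - derivative Q) * Q ^ m).coeff k) =
      (((1 - derivative P) * P ^ m).coeff k).coeff n := fun m k ↦ by
    rw [← FlajoletSoria.coeff_coeff_map_coe, Polynomial.map_mul, Polynomial.map_sub,
      Polynomial.map_one, Polynomial.map_pow, derivative_map]
  have hQ0 : constantCoeff (Q.coeff 0) = 0 := by
    rw [← PowerSeries.coeff_zero_eq_constantCoeff_apply, FlajoletSoria.coeff_coeff_map_coe,
      coeff_zero_eq_eval_zero, coeff_zero_eq_eval_zero, hP00]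
  have hQ1 : constantCoeff (Q.coeff 1) = 0 := by
    rw [← coeff_zero_eq_eval_zero, ← coeff_zero_eq_eval_zero, coeff_derivative] at hPY00
    rw [← PowerSeries.coeff_zero_eq_constantCoeff_apply,
      FlajoletSoria.coeff_coeff_map_coe]
    simpa using hPY00
  simp only [← hQ]
  exact ⟨FlajoletSoria.finite_setOf_coeff_one_sub_derivative_mul_pow_ne_zero Q hQ0 hQ1 n,
    FlajoletSoria.coeff_eq_finsum_of_eval_eq Q hQ0 hQ1 hf0 (by rwa [eval_map]) n⟩
end

section
/- Let P(X,Y) be a polynomial over the complex numbers ℂ with P(0,0) = 0 and ∂P/∂Y(0,0) = 0, and let f(X) = Σ_{n≥1} f_n X^n ∈ ℂ[[X]] be a power series with zero constant term defined implicitly by f(X) = P(X, f(X)). Then for every n ≥ 1, the family m ↦ [X^n Y^{m-1}]((1 − ∂P/∂Y(X,Y)) · P(X,Y)^m) (m ≥ 1) has finite support and f_n = Σ_{m≥1} [X^n Y^{m-1}] ((1 − ∂P/∂Y(X,Y)) · P(X,Y)^m). -/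
open Polynomial PowerSeries

/-!
Reducing modulo `X ^ (n + 1)`, the series `P(X, 0)`, `∂P/∂Y(X, 0)` and `f` become nilpotent, so
it suffices to treat a polynomial `p` over a commutative ring whose constant and linear
coefficients are nilpotent, with a nilpotent fixed point `F = p(F)`.

Giving the constant coefficient weight 2 and the linear one weight 1, `[Y^(m-1)] p^m` has
weight at least `m + 1`, so all but finitely many terms of the sum vanish.

The sum itself is the residue of `(Y - p)' p / (Y - p)` at its only root `F`, i.e. `p(F) = F`.
Concretely, it equals `[Y^(M-1)] ((Y - p)' p D)` where `D (Y - p) = Y^M - p^M`. Over `R⟦Y⟧`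
write `Y - p = (Y - F) u` with `u` a unit, and use `(Y - F) E = Y^N` for `E = Σ Y^i F^(N-1-i)`:
then `Y^N (Y - p)' p D ≡ Y^(M+1) E` modulo `Y^(M+N)`, and comparing coefficients of degree
`M + N - 1` gives `[Y^(M-1)] ((Y - p)' p D) = [Y^(N-2)] E = F`.
-/

section WeightIdeal

variable {R : Type*} [CommRing R]

def weightIdeal (a b : R) (s : ℕ) : Ideal R :=
  Ideal.span {x | ∃ i j : ℕ, s ≤ 2 * i + j ∧ x = a ^ i * b ^ j}

theorem pow_mul_pow_mem_weightIdeal (a b : R) {i j s : ℕ} (h : s ≤ 2 * i + j) :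
    a ^ i * b ^ j ∈ weightIdeal a b s :=
  Ideal.subset_span ⟨i, j, h, rfl⟩

theorem weightIdeal_antitone (a b : R) : Antitone (weightIdeal a b) :=
  fun _ _ h ↦ Ideal.span_mono fun _ ⟨i, j, hij, hx⟩ ↦ ⟨i, j, h.trans hij, hx⟩

theorem weightIdeal_zero (a b : R) : weightIdeal a b 0 = ⊤ :=
  (Ideal.eq_top_iff_one _).2 <| by
    simpa using pow_mul_pow_mem_weightIdeal a b (i := 0) (j := 0) le_rfl

theorem weightIdeal_mul_le (a b : R) (s t : ℕ) :
    weightIdeal a b s * weightIdeal a b t ≤ weightIdeal a b (s + t) := by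
  rw [weightIdeal, weightIdeal, Ideal.span_mul_span', Ideal.span_le]
  rintro _ ⟨_, ⟨i, j, hij, rfl⟩, _, ⟨k, l, hkl, rfl⟩, rfl⟩
  simpa only [SetLike.mem_coe, mul_mul_mul_comm, ← pow_add] using
    pow_mul_pow_mem_weightIdeal a b (i := i + k) (j := j + l) (s := s + t) (by omega)

theorem weightIdeal_eq_bot {a b : R} {N s : ℕ} (ha : a ^ N = 0) (hb : b ^ N = 0)
    (hs : 3 * N ≤ s + 2) : weightIdeal a b s = ⊥ := by
  refine eq_bot_iff.2 (Ideal.span_le.2 ?_)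
  rintro _ ⟨i, j, hij, rfl⟩
  rcases le_or_gt N i with hi | hi
  · simp [pow_eq_zero_of_le hi ha]
  · have hj : N ≤ j := by omega
    simp [pow_eq_zero_of_le hj hb]

end WeightIdeal

namespace Polynomial

variable {R : Type*} [CommRing R]

theorem coeff_mem_weightIdeal (p : R[X]) (e : ℕ) :
    p.coeff e ∈ weightIdeal (p.coeff 0) (p.coeff 1) (2 - e) := by
  match e with
  | 0 => simpa using pow_mul_pow_mem_weightIdeal (p.coeff 0) (p.coeff 1) (i := 1) (j := 0) le_rfl
  | 1 => simpa using pow_mul_pow_mem_weightIdeal (p.coeff 0) (p.coeff 1) (i := 0) (j := 1) le_rfl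
  | e + 2 => simp [weightIdeal_zero]

theorem coeff_pow_mem_weightIdeal (p : R[X]) (m d : ℕ) :
    (p ^ m).coeff d ∈ weightIdeal (p.coeff 0) (p.coeff 1) (2 * m - d) := by
  induction m generalizing d with
  | zero => simp [weightIdeal_zero]
  | succ m ih =>
    rw [pow_succ', coeff_mul]
    refine Ideal.sum_mem _ fun e he ↦ ?_
    have hd : e.1 + e.2 = d := Finset.HasAntidiagonal.mem_antidiagonal.1 he
    refine weightIdeal_antitone _ _ ?_
      (weightIdeal_mul_le _ _ _ _ (Ideal.mul_mem_mul (coeff_mem_weightIdeal p e.1) (ih e.2)))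
    omega

theorem coeff_mul_pow_eq_zero (g p : R[X]) {N m d : ℕ} (ha : p.coeff 0 ^ N = 0)
    (hb : p.coeff 1 ^ N = 0) (h : d + 3 * N ≤ 2 * m + 2) : (g * p ^ m).coeff d = 0 := by
  rw [coeff_mul]
  refine Finset.sum_eq_zero fun e he ↦ ?_
  have hd : e.1 + e.2 = d := Finset.HasAntidiagonal.mem_antidiagonal.1 he
  have hmem := coeff_pow_mem_weightIdeal p m e.2
  rw [weightIdeal_eq_bot ha hb (by omega), Ideal.mem_bot] at hmem
  rw [hmem, mul_zero]

theorem sum_Icc_coeff_mul_pow (g p : R[X]) (M : ℕ) :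
    ∑ m ∈ Finset.Icc 1 M, (g * p ^ m).coeff (m - 1)
      = (g * p * ∑ i ∈ Finset.range M, X ^ i * p ^ (M - 1 - i)).coeff (M - 1) := by
  rw [Finset.mul_sum, finsetSum_coeff]
  refine Finset.sum_nbij' (fun m ↦ M - m) (fun i ↦ M - i) (fun m hm ↦ ?_) (fun i hi ↦ ?_)
    (fun m hm ↦ ?_) (fun i hi ↦ ?_) (fun m hm ↦ ?_) <;>
    simp only [Finset.mem_Icc, Finset.mem_range] at * <;> try omega
  obtain ⟨k, rfl⟩ : ∃ k, m = k + 1 := ⟨m - 1, by omega⟩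
  rw [show M - 1 - (M - (k + 1)) = k by omega, Nat.add_sub_cancel,
    show g * p * (X ^ (M - (k + 1)) * p ^ k) = g * p ^ (k + 1) * X ^ (M - (k + 1)) by ring,
    coeff_mul_X_pow', if_pos (by omega), show M - 1 - (M - (k + 1)) = k by omega]

theorem coeff_one_sub_derivative_mul_pow_map {S : Type*} [CommRing S] (φ : R →+* S) (p : R[X])
    (m k : ℕ) :
    ((1 - derivative (p.map φ)) * p.map φ ^ m).coeff k
      = φ (((1 - derivative p) * p ^ m).coeff k) := by
  rw [derivative_map, ← Polynomial.map_pow, ← Polynomial.map_one φ, ← Polynomial.map_sub,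
    ← Polynomial.map_mul, coeff_map]

theorem isUnit_coeff_zero_of_eq_X_sub_C_mul {q u : R[X]} {F : R} (hq : q = (X - C F) * u)
    (hF : IsNilpotent F) (h1 : IsUnit (q.coeff 1)) : IsUnit (u.coeff 0) := by
  have hcoeff : u.coeff 0 = q.coeff 1 + F * u.coeff 1 := by
    simp [hq, sub_mul, coeff_X_mul, coeff_C_mul]
  exact hcoeff ▸ (Commute.isNilpotent_mul_right (Commute.all _ _) hF).isUnit_add_left_of_commute
    h1 (Commute.all _ _)

end Polynomial

namespace PowerSeries

variable {R : Type*} [CommRing R]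

theorem coeff_derivative_mul_mul_geom_sum {p u V : R⟦X⟧} {F : R} {N M : ℕ} (hN : 2 ≤ N)
    (hM : 1 ≤ M) (hF : F ^ N = 0) (hu : X - p = (X - C F) * u) (huV : u * V = 1)
    (hvan : X ^ (M + N) ∣ d⁄dX R (X - p) * p ^ (M + 1)) :
    coeff (M - 1) (d⁄dX R (X - p) * p * ∑ i ∈ Finset.range M, X ^ i * p ^ (M - 1 - i))
      = F := by
  set w : R⟦X⟧ := X - C F
  set E : R⟦X⟧ := ∑ i ∈ Finset.range N, X ^ i * C F ^ (N - 1 - i)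
  set D : R⟦X⟧ := ∑ i ∈ Finset.range M, X ^ i * p ^ (M - 1 - i)
  have hwE : w * E = X ^ N := by
    rw [mul_comm, geom_sum₂_mul, ← map_pow, hF, map_zero, sub_zero]
  have hDq : D * (X - p) = X ^ M - p ^ M := geom_sum₂_mul _ _ _
  have hderiv : d⁄dX R (X - p) = u + w * d⁄dX R u := by
    rw [hu, Derivation.leibniz, map_sub, derivative_X, derivative_C, sub_zero, smul_eq_mul,
      smul_eq_mul]
    ring
  have hp : p = X - w * u := by rw [← hu]; ring
  set r : R⟦X⟧ := X * d⁄dX R u * V - u - w * d⁄dX R u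
  -- `E * V / X ^ N` is `1 / (X - p)`: this is the partial fraction decomposition of
  -- `(X - p)' p / (X - p)`, whose polar part is `X / (X - F)`
  have hres : d⁄dX R (X - p) * p * E * V = X * E + X ^ N * r := by
    rw [hderiv, hp]
    linear_combination (X * E - w * E * u - w * E * w * d⁄dX R u) * huV + r * hwE
  have hkey : X ^ N * (d⁄dX R (X - p) * p * D)
      = X ^ M * (X * E + X ^ N * r) - d⁄dX R (X - p) * p ^ (M + 1) * E * V := by
    calc X ^ N * (d⁄dX R (X - p) * p * D)
        = d⁄dX R (X - p) * p * E * V * (D * (w * u)) := by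
          rw [← hwE]; linear_combination (-(d⁄dX R (X - p) * p * D * w * E)) * huV
      _ = X ^ M * (d⁄dX R (X - p) * p * E * V) - d⁄dX R (X - p) * p ^ (M + 1) * E * V := by
          rw [← hu, hDq]; ring
      _ = _ := by rw [hres]
  have hE : coeff (N - 2) E = F := by
    simp only [E, map_sum, ← map_pow, coeff_mul_C, coeff_X_pow]
    rw [Finset.sum_eq_single (N - 2) (fun i _ hi ↦ by simp [hi.symm]) (by simp; omega),
      if_pos rfl, one_mul, show N - 1 - (N - 2) = 1 by omega, pow_one]
  have hmain : coeff (M - 1 + N) (X ^ M * (X * E + X ^ N * r)) = F := by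
    rw [show M - 1 + N = N - 2 + 1 + M by omega, coeff_X_pow_mul, map_add, coeff_succ_X_mul, hE,
      coeff_X_pow_mul', if_neg (by omega), add_zero]
  have hhigh : coeff (M - 1 + N) (d⁄dX R (X - p) * p ^ (M + 1) * E * V) = 0 := by
    rw [mul_assoc]
    exact X_pow_dvd_iff.1 (hvan.mul_right _) _ (by omega)
  have hcoeff := congrArg (coeff (M - 1 + N)) hkey
  rwa [coeff_X_pow_mul, map_sub (coeff (M - 1 + N)), hmain, hhigh, sub_zero] at hcoeff

theorem isNilpotent_mk_span_X_pow {g : R⟦X⟧} (k : ℕ) (hg : constantCoeff g = 0) :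
    IsNilpotent (Ideal.Quotient.mk (Ideal.span {X ^ k}) g) :=
  ⟨k, by
    rw [← map_pow, Ideal.Quotient.eq_zero_iff_mem, Ideal.mem_span_singleton]
    exact pow_dvd_pow_of_dvd (X_dvd_iff.2 hg) k⟩

theorem coeff_eq_of_mk_span_X_pow_eq {g h : R⟦X⟧} {n : ℕ}
    (hgh : Ideal.Quotient.mk (Ideal.span {X ^ (n + 1)}) g = Ideal.Quotient.mk _ h) :
    coeff n g = coeff n h := by
  rw [Ideal.Quotient.eq, Ideal.mem_span_singleton, X_pow_dvd_iff] at hgh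
  exact sub_eq_zero.1 (by simpa using hgh n (by omega))

end PowerSeries

namespace Polynomial

variable {R : Type*} [CommRing R]

theorem sum_Icc_coeff_one_sub_derivative_mul_pow (p : R[X]) {F : R} {N : ℕ} (hN : 2 ≤ N)
    (ha : p.coeff 0 ^ N = 0) (hb : p.coeff 1 ^ N = 0) (hF : F ^ N = 0) (hfix : p.eval F = F) :
    ∑ m ∈ Finset.Icc 1 (4 * N), ((1 - derivative p) * p ^ m).coeff (m - 1) = F := by
  obtain ⟨u, hu⟩ : X - C F ∣ X - p := dvd_iff_isRoot.2 (by simp [hfix])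
  have hu0 : IsUnit (u.coeff 0) := isUnit_coeff_zero_of_eq_X_sub_C_mul hu ⟨N, hF⟩
    (by simpa using IsNilpotent.isUnit_one_sub ⟨N, hb⟩)
  obtain ⟨V, huV⟩ : ∃ V, (u : R⟦X⟧) * V = 1 :=
    (isUnit_iff_constantCoeff.2 (by simpa using hu0)).exists_right_inv
  have hvan : (PowerSeries.X : R⟦X⟧) ^ (4 * N + N)
      ∣ ((derivative (X - p) * p ^ (4 * N + 1) : R[X]) : R⟦X⟧) :=
    PowerSeries.X_pow_dvd_iff.2 fun d hd ↦ by
      rw [coeff_coe]; exact coeff_mul_pow_eq_zero _ _ ha hb (by omega)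
  rw [sum_Icc_coeff_mul_pow, show 1 - derivative p = derivative (X - p) by simp, ← coeff_coe,
    ← coeToPowerSeries.ringHom_apply]
  simp only [map_mul, map_sum, map_pow, coeToPowerSeries.ringHom_apply] at hvan ⊢
  push_cast [← PowerSeries.derivative_coe] at hvan ⊢
  exact PowerSeries.coeff_derivative_mul_mul_geom_sum hN (by omega) hF
    (by simpa using congrArg ((↑) : R[X] → R⟦X⟧) hu) huV hvan

theorem exists_sum_Icc_coeff_one_sub_derivative_mul_pow (p : R[X]) {F : R}
    (ha : IsNilpotent (p.coeff 0)) (hb : IsNilpotent (p.coeff 1)) (hF : IsNilpotent F)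
    (hfix : p.eval F = F) :
    ∃ M, (∀ m, M < m → ((1 - derivative p) * p ^ m).coeff (m - 1) = 0) ∧
      ∑ m ∈ Finset.Icc 1 M, ((1 - derivative p) * p ^ m).coeff (m - 1) = F := by
  obtain ⟨na, ha⟩ := ha
  obtain ⟨nb, hb⟩ := hb
  obtain ⟨nF, hF⟩ := hF
  set N := na + nb + nF + 2
  have ha : p.coeff 0 ^ N = 0 := pow_eq_zero_of_le (by omega) ha
  have hb : p.coeff 1 ^ N = 0 := pow_eq_zero_of_le (by omega) hb
  refine ⟨4 * N, fun m hm ↦ coeff_mul_pow_eq_zero _ _ ha hb (by omega),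
    sum_Icc_coeff_one_sub_derivative_mul_pow p (by omega) ha hb
      (pow_eq_zero_of_le (by omega) hF) hfix⟩

end Polynomial

-- `P(X, Y)` lives in `ℂ[X][X]` with outer variable `Y`: `[X^n Y^m] A` is `(A.coeff m).coeff n`.
/-- **Flajolet–Soria formula** over the complex numbers (Theorem 5 of the paper).
A two-variable polynomial `P(X,Y)` over `ℂ` is encoded as an element of
`(κ[X])[Y]`, i.e. `Polynomial (Polynomial ℂ)` whose outer variable is `Y`.
The coefficient `[X^n Y^m] A` is `(A.coeff m).coeff n`, and `∂P/∂Y` is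
`Polynomial.derivative P`. -/
theorem flajolet_soria_complex
    (P : Polynomial (Polynomial ℂ))
    (hP00 : (P.eval 0).eval 0 = 0)
    (hPY00 : ((Polynomial.derivative P).eval 0).eval 0 = 0)
    (f : PowerSeries ℂ)
    (hf0 : PowerSeries.constantCoeff f = 0)
    (hf : Polynomial.eval₂ Polynomial.coeToPowerSeries.ringHom f P = f) :
    ∀ n : ℕ, 1 ≤ n →
      {m : ℕ | 1 ≤ m ∧
          (((1 - Polynomial.derivative P) * P ^ m).coeff (m - 1)).coeff n ≠ 0}.Finite ∧
      PowerSeries.coeff n f =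
        ∑ᶠ (m : ℕ) (_ : 1 ≤ m),
          (((1 - Polynomial.derivative P) * P ^ m).coeff (m - 1)).coeff n := by
  intro n _
  set π := Ideal.Quotient.mk (Ideal.span {(PowerSeries.X : ℂ⟦X⟧) ^ (n + 1)})
  set φ := π.comp coeToPowerSeries.ringHom
  set c : ℕ → ℂ[X] := fun m ↦ ((1 - derivative P) * P ^ m).coeff (m - 1)
  have hnil (g : ℂ[X]) (hg : g.eval 0 = 0) : IsNilpotent (φ g) :=
    isNilpotent_mk_span_X_pow _ (by simpa [coeff_zero_eq_eval_zero] using hg)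
  obtain ⟨M, hvanish, hsum⟩ := exists_sum_Icc_coeff_one_sub_derivative_mul_pow (P.map φ)
    (by simpa [coeff_zero_eq_eval_zero] using hnil _ hP00)
    (by rw [Polynomial.coeff_map]
        exact hnil _
          (by simpa [← coeff_zero_eq_eval_zero, Polynomial.coeff_derivative] using hPY00))
    (isNilpotent_mk_span_X_pow _ hf0)
    (by rw [eval_map, ← hom_eval₂, hf])
  simp only [coeff_one_sub_derivative_mul_pow_map] at hvanish hsum
  have hzero (m : ℕ) (hm : M < m) : (c m).coeff n = 0 := by
    simpa using PowerSeries.coeff_eq_of_mk_span_X_pow_eq (g := (c m : ℂ⟦X⟧)) (h := 0) (n := n)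
      (by rw [map_zero, ← hvanish m hm]; rfl)
  have hsupp : {m | 1 ≤ m ∧ (c m).coeff n ≠ 0} ⊆ Finset.Icc 1 M := fun m ⟨h1, h2⟩ ↦
    Finset.mem_Icc.2 ⟨h1, not_lt.1 fun h ↦ h2 (hzero m h)⟩
  have hcoeff : PowerSeries.coeff n f = ∑ m ∈ Finset.Icc 1 M, (c m).coeff n := by
    rw [← Polynomial.finsetSum_coeff, ← Polynomial.coeff_coe]
    refine PowerSeries.coeff_eq_of_mk_span_X_pow_eq ?_
    rw [← hsum, ← map_sum]
    rfl
  refine ⟨(Finset.Icc 1 M).finite_toSet.subset hsupp, hcoeff.trans ?_⟩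
  exact (finsum_mem_eq_sum_of_subset (s := {m | 1 ≤ m}) _ (fun m hm ↦ hsupp ⟨hm.1, hm.2⟩)
    fun m hm ↦ (Finset.mem_Icc.1 hm).1).symm
end

section
/- Let κ be a field, P(X,Y) ∈ κ[X,Y] a polynomial, and φ(X) = Σ_{n≥1} c_n X^n ∈ κ[[X]] a formal power series with zero constant term such that P(X, φ(X)) = 0 and ∂P/∂Y(0,0) ≠ 0. Then the two-variable polynomial P(XY, Y) is divisible by Y in κ[X,Y], say P(XY,Y) = Y·S(X,Y); the polynomial S has nonzero constant term S(0,0) = ∂P/∂Y(0,0), hence is invertible as a formal power series in κ[[X,Y]]; and for every n ≥ 1, c_n equals the coefficient of X^n Y^n in the formal power series Y · (∂P/∂Y)(XY, Y) · S(X,Y)^{-1} ∈ κ[[X,Y]]. (Equivalently, φ is the diagonal of Y² (∂P/∂Y)(XY,Y) / P(XY,Y).) -/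
/-!
Write `φ = X φ₁`. Since `φ` is a root of `P(X, ·)` over `κ⟦X⟧`, `P(X, Y) = (Y - φ(X)) U(X, Y)` with
`U ∈ κ⟦X⟧[Y]`. Substituting `X ↦ XY` and writing `φ(XY) = Y ψ` with `ψ = X φ₁(XY)`, this gives
`P(XY, Y) = Y (1 - ψ) u` and `∂P/∂Y(XY, Y) = u + Y (1 - ψ) u'`, where `u = U(XY, Y)` and
`u' = (∂U/∂Y)(XY, Y)`. So `S = (1 - ψ) u` and
  `Y ∂P/∂Y(XY, Y) / S = Y + φ(XY) + φ(XY) ψ / (1 - ψ) + Y² u' / u`.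
Give `X^a Y^b` the weight `a - b`, so that the diagonal is the weight-`0` part. Now `φ(XY)` has
weight `0`, `u`, `u'` and hence `u' / u` have weights `≤ 0`, and `ψ` has weights `≥ 1`, hence
`1 / (1 - ψ)` has weights `≥ 0`. So only `φ(XY)` contributes to the diagonal, and its diagonal
is `φ`.
-/

open MvPolynomial

namespace MvPowerSeries

variable {σ R : Type*}

def WeightsLE [Semiring R] (ℓ : (σ →₀ ℕ) →+ ℤ) (k : ℤ) (F : MvPowerSeries σ R) : Prop :=
  ∀ d, k < ℓ d → coeff d F = 0

section Semiring

variable [Semiring R] {ℓ : (σ →₀ ℕ) →+ ℤ} {j k : ℤ} {F G : MvPowerSeries σ R}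

theorem WeightsLE.mono (hF : WeightsLE ℓ j F) (hjk : j ≤ k) : WeightsLE ℓ k F :=
  fun d hd => hF d (hjk.trans_lt hd)

theorem WeightsLE.add (hF : WeightsLE ℓ k F) (hG : WeightsLE ℓ k G) :
    WeightsLE ℓ k (F + G) :=
  fun d hd => by rw [map_add, hF d hd, hG d hd, add_zero]

theorem weightsLE_monomial (d : σ →₀ ℕ) (a : R) : WeightsLE ℓ (ℓ d) (monomial d a) := by
  classical
  intro e he
  rw [coeff_monomial, if_neg (by rintro rfl; exact he.false)]

theorem WeightsLE.mul (hF : WeightsLE ℓ j F) (hG : WeightsLE ℓ k G) :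
    WeightsLE ℓ (j + k) (F * G) := by
  classical
  intro d hd
  rw [coeff_mul]
  refine Finset.sum_eq_zero fun p hp => ?_
  have hsplit : ℓ d = ℓ p.1 + ℓ p.2 := by
    rw [← Finset.HasAntidiagonal.mem_antidiagonal.mp hp, map_add]
  rcases lt_or_ge j (ℓ p.1) with h | h
  · rw [hF _ h, zero_mul]
  · rw [hG _ (by omega), mul_zero]

theorem weightsLE_one : WeightsLE ℓ 0 (1 : MvPowerSeries σ R) := by
  simpa using weightsLE_monomial (ℓ := ℓ) 0 (1 : R)

theorem WeightsLE.pow (hF : WeightsLE ℓ 0 F) (n : ℕ) : WeightsLE ℓ 0 (F ^ n) := by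
  induction n with
  | zero => simpa using weightsLE_one
  | succ n ih => simpa only [pow_succ, add_zero] using ih.mul hF

end Semiring

theorem WeightsLE.sub [Ring R] {ℓ : (σ →₀ ℕ) →+ ℤ} {k : ℤ} {F G : MvPowerSeries σ R}
    (hF : WeightsLE ℓ k F) (hG : WeightsLE ℓ k G) : WeightsLE ℓ k (F - G) :=
  fun d hd => by rw [map_sub, hF d hd, hG d hd, sub_zero]

theorem WeightsLE.inv {K : Type*} [Field K] {ℓ : (σ →₀ ℕ) →+ ℤ} {F : MvPowerSeries σ K}
    (hF : WeightsLE ℓ 0 F) : WeightsLE ℓ 0 F⁻¹ := by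
  classical
  intro d
  induction d using WellFoundedLT.induction with
  | _ d ih =>
    intro hd
    rw [coeff_inv, if_neg (by rintro rfl; simp at hd), Finset.sum_eq_zero, mul_zero]
    intro p hp
    have hsplit : ℓ d = ℓ p.1 + ℓ p.2 := by
      rw [← Finset.HasAntidiagonal.mem_antidiagonal.mp hp, map_add]
    split_ifs with hlt
    · rcases lt_or_ge 0 (ℓ p.1) with h | h
      · rw [hF _ h, zero_mul]
      · rw [ih _ hlt (by omega), mul_zero]
    · rfl

theorem weightsLE_eval₂ {A : Type*} [CommSemiring A] [CommSemiring R] {ℓ : (σ →₀ ℕ) →+ ℤ}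
    (f : A →+* MvPowerSeries σ R) (x : MvPowerSeries σ R) (hf : ∀ a, WeightsLE ℓ 0 (f a))
    (hx : WeightsLE ℓ 0 x) (p : Polynomial A) : WeightsLE ℓ 0 (p.eval₂ f x) := by
  induction p using Polynomial.induction_on' with
  | add p q hp hq => simpa only [Polynomial.eval₂_add] using hp.add hq
  | monomial n a => simpa only [Polynomial.eval₂_monomial, add_zero] using (hf a).mul (hx.pow n)

end MvPowerSeries

namespace MvPolynomial

theorem X_dvd_of_coe_dvd {σ R : Type*} [CommSemiring R] {i : σ}
    {p : MvPolynomial σ R} (h : MvPowerSeries.X i ∣ (p : MvPowerSeries σ R)) : X i ∣ p := by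
  classical
  rw [X_dvd_iff_modMonomial_eq_zero]
  ext s
  by_cases hs : Finsupp.single i 1 ≤ s
  · rw [coeff_modMonomial_of_le _ hs, coeff_zero]
  · rw [coeff_modMonomial_of_not_le _ hs, coeff_zero, ← coeff_coe]
    exact MvPowerSeries.X_dvd_iff.mp h s (by simpa [Finsupp.single_le_iff] using hs)

theorem constantCoeff_coe {σ R : Type*} [CommSemiring R] (p : MvPolynomial σ R) :
    MvPowerSeries.constantCoeff (p : MvPowerSeries σ R) = eval 0 p := by
  rw [← MvPowerSeries.coeff_zero_eq_constantCoeff_apply, coeff_coe, eval_zero, constantCoeff_eq]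

end MvPolynomial

theorem MvPowerSeries.X_ne_zero {σ R : Type*} [CommSemiring R] [Nontrivial R] (i : σ) :
    (MvPowerSeries.X i : MvPowerSeries σ R) ≠ 0 := by
  rw [← MvPolynomial.coe_X]
  exact MvPolynomial.coe_eq_zero_iff.not.mpr (MvPolynomial.X_ne_zero i)

namespace Furstenberg

open MvPowerSeries (WeightsLE)

variable {R : Type*} [CommRing R]

def degXSubDegY : (Fin 2 →₀ ℕ) →+ ℤ where
  toFun d := d 0 - d 1
  map_zero' := by simp
  map_add' d e := by simp only [Finsupp.add_apply, Nat.cast_add]; ring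

theorem hasSubst_X_mul_X :
    PowerSeries.HasSubst (MvPowerSeries.X 0 * MvPowerSeries.X 1 : MvPowerSeries (Fin 2) R) :=
  PowerSeries.HasSubst.of_constantCoeff_zero (by simp)

noncomputable def substXMulY : PowerSeries R →ₐ[R] MvPowerSeries (Fin 2) R :=
  PowerSeries.substAlgHom hasSubst_X_mul_X

theorem substXMulY_X : substXMulY (PowerSeries.X : PowerSeries R) =
    MvPowerSeries.X 0 * MvPowerSeries.X 1 :=
  PowerSeries.substAlgHom_X _

theorem coeff_substXMulY (f : PowerSeries R) (d : Fin 2 →₀ ℕ) :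
    MvPowerSeries.coeff d (substXMulY f) =
      if d 0 = d 1 then PowerSeries.coeff (d 0) f else 0 := by
  classical
  have hpow (k : ℕ) : (MvPowerSeries.X 0 * MvPowerSeries.X 1 : MvPowerSeries (Fin 2) R) ^ k =
      MvPowerSeries.monomial (Finsupp.single 0 k + Finsupp.single 1 k) 1 := by
    rw [mul_pow, MvPowerSeries.X_pow_eq, MvPowerSeries.X_pow_eq,
      MvPowerSeries.monomial_mul_monomial, one_mul]
  rw [substXMulY, PowerSeries.coe_substAlgHom, PowerSeries.coeff_subst hasSubst_X_mul_X,
    finsum_eq_single _ (d 0)]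
  · rw [hpow, MvPowerSeries.coeff_monomial, smul_eq_mul]
    by_cases h : d 0 = d 1
    · rw [if_pos (by ext i; fin_cases i <;> simp [h]), if_pos h, mul_one]
    · rw [if_neg (fun hd => h (by rw [hd]; simp)), if_neg h, mul_zero]
  · intro k hk
    rw [hpow, MvPowerSeries.coeff_monomial, if_neg (by rintro rfl; simp at hk), smul_zero]

theorem coeff_substXMulY_of_degXSubDegY_ne_zero (f : PowerSeries R) {d : Fin 2 →₀ ℕ}
    (hd : degXSubDegY d ≠ 0) : MvPowerSeries.coeff d (substXMulY f) = 0 := by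
  rw [coeff_substXMulY, if_neg]
  intro h
  simp [degXSubDegY, h] at hd

theorem weightsLE_substXMulY (f : PowerSeries R) : WeightsLE degXSubDegY 0 (substXMulY f) :=
  fun _ hd => coeff_substXMulY_of_degXSubDegY_ne_zero f hd.ne'

theorem weightsLE_neg_substXMulY (f : PowerSeries R) :
    WeightsLE (-degXSubDegY) 0 (substXMulY f) :=
  fun _ hd => coeff_substXMulY_of_degXSubDegY_ne_zero f (neg_ne_zero.mp hd.ne')

noncomputable def evalXMulY : Polynomial (PowerSeries R) →ₐ[R] MvPowerSeries (Fin 2) R :=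
  Polynomial.eval₂AlgHom substXMulY (MvPowerSeries.X 1) fun _ => Commute.all _ _

theorem evalXMulY_X : evalXMulY (Polynomial.X : Polynomial (PowerSeries R)) = MvPowerSeries.X 1 :=
  Polynomial.eval₂_X _ _

theorem evalXMulY_C (f : PowerSeries R) : evalXMulY (Polynomial.C f) = substXMulY f :=
  Polynomial.eval₂_C _ _

theorem weightsLE_evalXMulY (U : Polynomial (PowerSeries R)) :
    WeightsLE degXSubDegY 0 (evalXMulY U) :=
  MvPowerSeries.weightsLE_eval₂ _ _ weightsLE_substXMulY
    ((MvPowerSeries.weightsLE_monomial _ _).mono (by simp [degXSubDegY])) U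

noncomputable def toPolyY : MvPolynomial (Fin 2) R →ₐ[R] Polynomial (PowerSeries R) :=
  aeval ![Polynomial.C PowerSeries.X, Polynomial.X]

theorem evalXMulY_toPolyY (Q : MvPolynomial (Fin 2) R) :
    evalXMulY (toPolyY Q) =
      ((aeval ![X 0 * X 1, X 1] Q : MvPolynomial (Fin 2) R) : MvPowerSeries (Fin 2) R) := by
  have h : evalXMulY.comp toPolyY = (coeToMvPowerSeries.algHom R).comp
      (aeval ![(X 0 * X 1 : MvPolynomial (Fin 2) R), X 1]) := by
    apply MvPolynomial.algHom_ext
    intro i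
    fin_cases i <;> simp [evalXMulY, toPolyY, substXMulY_X]
  exact DFunLike.congr_fun h Q

theorem eval_toPolyY (φ : PowerSeries R) (Q : MvPolynomial (Fin 2) R) :
    (toPolyY Q).eval φ = aeval ![PowerSeries.X, φ] Q := by
  have h : ((Polynomial.aeval φ).restrictScalars R).comp toPolyY =
      aeval ![PowerSeries.X, φ] := by
    apply MvPolynomial.algHom_ext
    intro i
    fin_cases i <;> simp [toPolyY]
  exact DFunLike.congr_fun h Q

theorem toPolyY_pderiv (Q : MvPolynomial (Fin 2) R) :
    toPolyY (pderiv 1 Q) = Polynomial.derivative (toPolyY Q) := by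
  induction Q using MvPolynomial.induction_on with
  | C r => simp [toPolyY]
  | add p q hp hq => rw [map_add, map_add, hp, hq, map_add, Polynomial.derivative_add]
  | mul_X p i hp =>
    rw [pderiv_mul, map_add, map_mul, map_mul, hp, map_mul, Polynomial.derivative_mul]
    fin_cases i <;> simp [toPolyY, pderiv_X]

theorem constantCoeff_coe_aeval_X_mul_X (Q : MvPolynomial (Fin 2) R) :
    MvPowerSeries.constantCoeff
      ((aeval ![X 0 * X 1, X 1] Q : MvPolynomial (Fin 2) R) : MvPowerSeries (Fin 2) R) =
      eval 0 Q := by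
  induction Q using MvPolynomial.induction_on with
  | C r => simp
  | add p q hp hq => rw [map_add, coe_add, map_add, hp, hq, map_add]
  | mul_X p i hp => fin_cases i <;> simp

theorem X_mul_X_mul_substXMulY (f : PowerSeries R) :
    MvPowerSeries.X 1 * (MvPowerSeries.X 0 * substXMulY f) = substXMulY (PowerSeries.X * f) := by
  rw [map_mul, substXMulY_X]
  ring

theorem evalXMulY_X_sub_C_X_mul (f : PowerSeries R) :
    evalXMulY (Polynomial.X - Polynomial.C (PowerSeries.X * f)) =
      MvPowerSeries.X 1 * (1 - MvPowerSeries.X 0 * substXMulY f) := by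
  rw [map_sub, evalXMulY_X, evalXMulY_C, ← X_mul_X_mul_substXMulY]
  ring

section Factorization

variable {P : MvPolynomial (Fin 2) R} {f : PowerSeries R} {U : Polynomial (PowerSeries R)}

theorem coe_aeval_X_mul_X_eq
    (hU : toPolyY P = (Polynomial.X - Polynomial.C (PowerSeries.X * f)) * U) :
    ((aeval ![X 0 * X 1, X 1] P : MvPolynomial (Fin 2) R) : MvPowerSeries (Fin 2) R) =
      MvPowerSeries.X 1 * ((1 - MvPowerSeries.X 0 * substXMulY f) * evalXMulY U) := by
  rw [← evalXMulY_toPolyY, hU, map_mul, evalXMulY_X_sub_C_X_mul, mul_assoc]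

theorem coe_aeval_X_mul_X_pderiv_eq
    (hU : toPolyY P = (Polynomial.X - Polynomial.C (PowerSeries.X * f)) * U) :
    ((aeval ![X 0 * X 1, X 1] (pderiv 1 P) : MvPolynomial (Fin 2) R) : MvPowerSeries (Fin 2) R) =
      evalXMulY U + MvPowerSeries.X 1 * (1 - MvPowerSeries.X 0 * substXMulY f) *
        evalXMulY (Polynomial.derivative U) := by
  rw [← evalXMulY_toPolyY, toPolyY_pderiv, hU, Polynomial.derivative_mul,
    Polynomial.derivative_sub, Polynomial.derivative_X, Polynomial.derivative_C, sub_zero,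
    one_mul, map_add, map_mul, evalXMulY_X_sub_C_X_mul]

end Factorization

theorem weightsLE_X_mul_substXMulY (f : PowerSeries R) :
    WeightsLE (-degXSubDegY) (-1) (MvPowerSeries.X 0 * substXMulY f) :=
  ((MvPowerSeries.weightsLE_monomial (Finsupp.single 0 1) 1).mul
    (weightsLE_neg_substXMulY f)).mono (by simp [degXSubDegY])

variable {κ : Type*} [Field κ]

theorem coeff_diag_X_mul_mul_inv {φ : PowerSeries κ} {ψ u u₂ : MvPowerSeries (Fin 2) κ}
    (hψ : WeightsLE (-degXSubDegY) (-1) ψ) (hYψ : MvPowerSeries.X 1 * ψ = substXMulY φ)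
    (hu : WeightsLE degXSubDegY 0 u) (hu₂ : WeightsLE degXSubDegY 0 u₂)
    (hu0 : MvPowerSeries.constantCoeff u ≠ 0) (n : ℕ) :
    MvPowerSeries.coeff (Finsupp.single 0 n + Finsupp.single 1 n)
      (MvPowerSeries.X 1 * (u + MvPowerSeries.X 1 * (1 - ψ) * u₂) * ((1 - ψ) * u)⁻¹) =
      PowerSeries.coeff n φ := by
  set Y : MvPowerSeries (Fin 2) κ := MvPowerSeries.X 1
  set d : Fin 2 →₀ ℕ := Finsupp.single 0 n + Finsupp.single 1 n
  have hw : WeightsLE (-degXSubDegY) 0 (1 - ψ)⁻¹ :=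
    (MvPowerSeries.weightsLE_one.sub (hψ.mono (by norm_num))).inv
  have hψ0 : MvPowerSeries.constantCoeff ψ = 0 := by
    rw [← MvPowerSeries.coeff_zero_eq_constantCoeff_apply]
    exact hψ 0 (by simp)
  have hψw : (1 - ψ) * (1 - ψ)⁻¹ = 1 := MvPowerSeries.mul_inv_cancel _ (by simp [hψ0])
  have huu : u * u⁻¹ = 1 := MvPowerSeries.mul_inv_cancel _ hu0
  have hsplit : Y * (u + Y * (1 - ψ) * u₂) * ((1 - ψ) * u)⁻¹ =
      Y + substXMulY φ + substXMulY φ * (ψ * (1 - ψ)⁻¹) + Y ^ 2 * (u₂ * u⁻¹) := by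
    rw [MvPowerSeries.mul_inv_rev, ← hYψ]
    linear_combination (Y * (1 - ψ)⁻¹) * huu + (Y * (1 + ψ) + Y ^ 2 * u₂ * u⁻¹) * hψw
  have hd : degXSubDegY d = 0 := by simp [d, degXSubDegY]
  have hY : MvPowerSeries.coeff d Y = 0 :=
    MvPowerSeries.weightsLE_monomial (ℓ := degXSubDegY) (Finsupp.single 1 1) (1 : κ) d
      (by rw [hd]; simp [degXSubDegY])
  have hψ_part : MvPowerSeries.coeff d (substXMulY φ * (ψ * (1 - ψ)⁻¹)) = 0 :=
    ((weightsLE_neg_substXMulY φ).mul (hψ.mul hw)) d (by simp [hd])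
  have hY2 : MvPowerSeries.coeff d (Y ^ 2 * (u₂ * u⁻¹)) = 0 := by
    rw [MvPowerSeries.X_pow_eq]
    exact ((MvPowerSeries.weightsLE_monomial (ℓ := degXSubDegY) (Finsupp.single 1 2) (1 : κ)).mul
      (hu₂.mul hu.inv)) d (by rw [hd]; simp [degXSubDegY])
  rw [hsplit, map_add, map_add, map_add, hY, hψ_part, hY2, coeff_substXMulY]
  simp [d]

end Furstenberg

open Furstenberg

/-- **Furstenberg's proposition** (Proposition 1 of the paper).
A two-variable polynomial `P(X,Y)` over a field `κ` is encoded as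
`MvPolynomial (Fin 2) κ`, with variable `0` playing the role of `X` and
variable `1` the role of `Y`.  If `φ = ∑_{n ≥ 1} c_n X^n` satisfies
`P(X, φ(X)) = 0` and `∂P/∂Y(0,0) ≠ 0`, then `P(XY,Y) = Y · S(X,Y)` with
`S(0,0) = ∂P/∂Y(0,0) ≠ 0`, `S` invertible as a power series, and `φ` is the
diagonal of `Y · (∂P/∂Y)(XY,Y) · S(X,Y)⁻¹`. -/
theorem furstenberg_diagonal (κ : Type*) [Field κ]
    (P : MvPolynomial (Fin 2) κ)
    (φ : PowerSeries κ)
    (hφ0 : PowerSeries.constantCoeff φ = 0)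
    (hroot : MvPolynomial.aeval ![PowerSeries.X, φ] P = 0)
    (hPY : MvPolynomial.eval (0 : Fin 2 → κ) (MvPolynomial.pderiv 1 P) ≠ 0) :
    ∃ S : MvPolynomial (Fin 2) κ,
      -- `P(XY, Y)` is divisible by `Y`, with quotient `S`
      (MvPolynomial.aeval ![(X 0 : MvPolynomial (Fin 2) κ) * X 1, X 1] P
          = X 1 * S) ∧
      -- `S(0,0) = ∂P/∂Y(0,0)`
      MvPolynomial.eval (0 : Fin 2 → κ) S
          = MvPolynomial.eval (0 : Fin 2 → κ) (MvPolynomial.pderiv 1 P) ∧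
      -- hence `S` is invertible as a formal power series
      IsUnit (S : MvPowerSeries (Fin 2) κ) ∧
      -- and `φ` is the diagonal of `Y · (∂P/∂Y)(XY,Y) · S⁻¹`
      ∀ n : ℕ, 1 ≤ n →
        PowerSeries.coeff n φ =
          MvPowerSeries.coeff (Finsupp.single 0 n + Finsupp.single 1 n)
            (MvPowerSeries.X 1
              * ((MvPolynomial.aeval
                    ![(X 0 : MvPolynomial (Fin 2) κ) * X 1, X 1]
                    (MvPolynomial.pderiv 1 P) : MvPolynomial (Fin 2) κ)
                  : MvPowerSeries (Fin 2) κ)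
              * (S : MvPowerSeries (Fin 2) κ)⁻¹) := by
  obtain ⟨φ₁, rfl⟩ := PowerSeries.X_dvd_iff.mpr hφ0
  obtain ⟨U, hU⟩ : Polynomial.X - Polynomial.C (PowerSeries.X * φ₁) ∣ toPolyY P :=
    Polynomial.dvd_iff_isRoot.mpr (by rw [Polynomial.IsRoot, eval_toPolyY, hroot])
  have hP := coe_aeval_X_mul_X_eq hU
  have hD := coe_aeval_X_mul_X_pderiv_eq hU
  obtain ⟨S, hS⟩ := X_dvd_of_coe_dvd (hP ▸ dvd_mul_right _ _)
  have hSu : (S : MvPowerSeries (Fin 2) κ) =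
      (1 - MvPowerSeries.X 0 * substXMulY φ₁) * evalXMulY U :=
    mul_left_cancel₀ (MvPowerSeries.X_ne_zero 1) (by rw [← coe_X, ← coe_mul, ← hS, hP, coe_X])
  have hu0 : MvPowerSeries.constantCoeff (evalXMulY U) = eval 0 (pderiv 1 P) := by
    have h := congrArg MvPowerSeries.constantCoeff hD
    rwa [constantCoeff_coe_aeval_X_mul_X, map_add, map_mul, map_mul, MvPowerSeries.constantCoeff_X,
      zero_mul, zero_mul, add_zero, eq_comm] at h
  have hS0 : eval 0 S = eval 0 (pderiv 1 P) := by
    rw [← constantCoeff_coe, hSu, map_mul, map_sub, map_one, map_mul,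
      MvPowerSeries.constantCoeff_X, zero_mul, sub_zero, one_mul, hu0]
  refine ⟨S, hS, hS0, ?_, fun n _ => ?_⟩
  · rw [MvPowerSeries.isUnit_iff_constantCoeff, constantCoeff_coe, hS0]
    exact hPY.isUnit
  · rw [hD, hSu]
    exact (coeff_diag_X_mul_mul_inv (weightsLE_X_mul_substXMulY φ₁) (X_mul_X_mul_substXMulY φ₁)
      (weightsLE_evalXMulY U) (weightsLE_evalXMulY _) (hu0 ▸ hPY) n).symm
end

section
/- Let κ be a field of positive characteristic p and let f ∈ κ[[x₁,…,x_m]] be a formal power series in m variables that represents a rational function, i.e., there exist polynomials P, Q ∈ κ[x₁,…,x_m] with Q ≠ 0 (and Q having nonzero constant term) such that Q·f = P in κ[[x₁,…,x_m]]. Then the diagonal 𝒟f(t) = Σ_n a_{n,…,n} tⁿ ∈ κ[[t]] (where f = Σ a_{n₁,…,n_m} x₁^{n₁}⋯x_m^{n_m}) is algebraic over the rational function field κ(t); that is, there exists a nonzero polynomial G(t,Y) with coefficients in κ[t] such that G(t, 𝒟f(t)) = 0 in κ[[t]]. -/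
/-!
Write `f = P / Q` and put `h_β = x^β / Q` for `β` in the box `[0, D]^σ`, where `D` bounds the
degrees of `P` and `Q` in each variable. The operators `Λ_j (∑ a_s x^s) = ∑ a_{p s + (j,…,j)} x^s`
split a diagonal as `𝒟g(t) = ∑_{j<p} t^j (𝒟Λ_j g)(t^p)`. Since `Q^p = Q'(x^p)` with `Q'` the
Frobenius twist of `Q`, and `Λ_j (B(x^p) g) = B Λ_j g`, the series `Λ_j h_β = Λ_j(x^β Q^{p-1}) / Q'`
is a `κ`-combination of the twists `x^γ / Q'` of the `h_γ`, whose diagonals at `t^p` are the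
`(𝒟h_γ)^p`. So every `𝒟h_β` lies in the `κ[t]`-span of the `(𝒟h_γ)^p`, and by Frobenius
`𝒟f, (𝒟f)^p, …, (𝒟f)^{p^r}` (`r` the size of the box) all lie in the span of the `r` elements
`(𝒟h_γ)^{p^r}`. They are therefore linearly dependent over `κ[t]`: an algebraic relation for `𝒟f`.
-/

open Polynomial Submodule Set

section FrobeniusStableSpan

variable {R A : Type*} [CommRing R] [CommRing A] [Algebra R A] (p : ℕ) [Fact p.Prime] [CharP A p]

theorem pow_char_pow_mem_span_image {s : Set A} {x : A} (hx : x ∈ span R s) (n : ℕ) :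
    x ^ p ^ n ∈ span R ((· ^ p ^ n) '' s) := by
  induction hx using Submodule.span_induction with
  | mem y hy => exact subset_span (mem_image_of_mem _ hy)
  | zero => rw [zero_pow (pow_ne_zero _ (Fact.out : p.Prime).ne_zero)]; exact zero_mem _
  | add y z _ _ hy hz => rw [add_pow_char_pow]; exact add_mem hy hz
  | smul r y _ hy => rw [_root_.smul_pow]; exact smul_mem _ _ hy

theorem span_le_span_image_pow_char_pow {s : Set A} (hs : s ⊆ span R ((· ^ p) '' s)) (n : ℕ) :
    span R s ≤ span R ((· ^ p ^ n) '' s) := by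
  induction n with
  | zero => simp
  | succ n ih =>
    refine ih.trans (span_le.2 ?_)
    rintro _ ⟨y, hy, rfl⟩
    simpa only [SetLike.mem_coe, image_image, ← pow_mul, ← pow_succ'] using
      pow_char_pow_mem_span_image p (hs hy) n

theorem isAlgebraic_of_mem_span_of_subset_span_image_pow [Nontrivial R] {s : Set A}
    (hfin : s.Finite) (hs : s ⊆ span R ((· ^ p) '' s)) {x : A} (hx : x ∈ span R s) :
    IsAlgebraic R x := by
  set r := s.ncard
  set t := (· ^ p ^ r) '' s
  have hpow (k : Fin (r + 1)) : x ^ p ^ (k : ℕ) ∈ span R t := by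
    have hk : p ^ (r - k) * p ^ (k : ℕ) = p ^ r := by
      rw [← pow_add, Nat.sub_add_cancel (Nat.lt_succ_iff.1 k.2)]
    simpa only [image_image, ← pow_mul, hk] using
      pow_char_pow_mem_span_image p (span_le_span_image_pow_char_pow p hs (r - k) hx) k
  have hdep : ¬ LinearIndependent R fun k : Fin (r + 1) => x ^ p ^ (k : ℕ) := by
    intro hli
    have : Fintype t := (hfin.image _).fintype
    have hle := linearIndependent_le_span' _ hli t (range_subset_iff.2 hpow)
    have htr : Fintype.card t ≤ r := by
      rw [← Nat.card_eq_fintype_card, Nat.card_coe_set_eq]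
      exact ncard_image_le hfin
    simp only [Cardinal.mk_fintype, Fintype.card_fin, Nat.cast_le] at hle
    omega
  obtain ⟨g, hg, k, hk⟩ := Fintype.not_linearIndependent_iff.1 hdep
  have hinj : Function.Injective (p ^ · : ℕ → ℕ) :=
    Nat.pow_right_injective (Fact.out : p.Prime).two_le
  refine ⟨∑ k, C (g k) * X ^ p ^ (k : ℕ), fun h0 => hk ?_, ?_⟩
  · have := congrArg (coeff · (p ^ (k : ℕ))) h0
    simpa [finsetSum_coeff, coeff_C_mul_X_pow, hinj.eq_iff, Fin.val_inj] using this
  · simpa [map_sum, Algebra.smul_def] using hg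

end FrobeniusStableSpan

theorem MvPolynomial.degreeOf_monomial_mul_pow_le {σ R : Type*} [CommSemiring R]
    [Nontrivial R] {Q : MvPolynomial σ R} {β : σ →₀ ℕ} {i : σ} {D : ℕ} (hβ : β i ≤ D)
    (hQ : Q.degreeOf i ≤ D) (n : ℕ) :
    (monomial β (1 : R) * Q ^ n).degreeOf i ≤ (n + 1) * D :=
  calc _ ≤ (monomial β (1 : R)).degreeOf i + (Q ^ n).degreeOf i :=
        degreeOf_mul_le _ _ _
    _ ≤ D + n * D := by
        rw [degreeOf_monomial_eq _ _ one_ne_zero]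
        exact add_le_add hβ ((degreeOf_pow_le i Q n).trans (Nat.mul_le_mul_left n hQ))
    _ = (n + 1) * D := by ring

noncomputable section

namespace MvPowerSeries

section Diagonal

variable {σ R : Type*} [Finite σ] [CommRing R]

variable (σ) in
def diagExp (n : ℕ) : σ →₀ ℕ := Finsupp.equivFunOnFinite.symm fun _ => n

@[simp]
theorem diagExp_apply (n : ℕ) (i : σ) : diagExp σ n i = n := rfl

variable (R) in
def diag : MvPowerSeries σ R →ₗ[R] PowerSeries R where
  toFun f := PowerSeries.mk fun n => coeff (diagExp σ n) f
  map_add' f g := by ext; simp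
  map_smul' r f := by ext; simp

@[simp]
theorem coeff_diag (n : ℕ) (f : MvPowerSeries σ R) :
    PowerSeries.coeff n (diag R f) = coeff (diagExp σ n) f := by
  simp [diag]

theorem diag_map {S : Type*} [CommRing S] (φ : R →+* S) (f : MvPowerSeries σ R) :
    diag S (map φ f) = PowerSeries.map φ (diag R f) := by
  ext n
  simp [coeff_map]

theorem expand_diag_map_frobenius (p : ℕ) (hp : p ≠ 0) [ExpChar R p] (f : MvPowerSeries σ R) :
    PowerSeries.expand p hp (diag R (map (frobenius R p) f)) = diag R f ^ p := by
  rw [diag_map, ← PowerSeries.map_expand]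
  exact map_frobenius_expand p hp

variable (R) in
def diagCartier (p j : ℕ) : MvPowerSeries σ R →ₗ[R] MvPowerSeries σ R where
  toFun f s := coeff (p • s + diagExp σ j) f
  map_add' _ _ := rfl
  map_smul' _ _ := rfl

@[simp]
theorem coeff_diagCartier (p j : ℕ) (s : σ →₀ ℕ) (f : MvPowerSeries σ R) :
    coeff s (diagCartier R p j f) = coeff (p • s + diagExp σ j) f :=
  rfl

theorem diag_eq_sum_X_pow_mul_expand (p : ℕ) (hp : p ≠ 0) (f : MvPowerSeries σ R) :
    diag R f = ∑ j ∈ Finset.range p,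
      PowerSeries.X ^ j * PowerSeries.expand p hp (diag R (diagCartier R p j f)) := by
  ext k
  have hp' : 0 < p := Nat.pos_of_ne_zero hp
  simp only [map_sum, PowerSeries.coeff_X_pow_mul', PowerSeries.coeff_expand, coeff_diag,
    coeff_diagCartier]
  rw [Finset.sum_eq_single_of_mem (k % p) (Finset.mem_range.2 (Nat.mod_lt k hp'))]
  · have hdvd : p ∣ k - k % p := Nat.dvd_sub_mod k
    rw [if_pos (Nat.mod_le k p), if_pos hdvd]
    have hk : p • diagExp σ ((k - k % p) / p) + diagExp σ (k % p) = diagExp σ k := by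
      ext i
      have := Nat.mul_div_cancel' hdvd
      have := Nat.mod_le k p
      simp only [Finsupp.coe_add, Finsupp.coe_smul, Pi.add_apply, Pi.smul_apply, smul_eq_mul,
        diagExp_apply]
      omega
    rw [hk]
  · intro j hj hjk
    split_ifs with hle hdvd
    · exact absurd ((Nat.mod_eq_of_lt (Finset.mem_range.1 hj)).symm.trans
        ((Nat.modEq_iff_dvd' hle).2 hdvd)) hjk
    all_goals rfl

theorem nsmul_le_nsmul_add_diagExp_iff {p j : ℕ} (hj : j < p) {a s : σ →₀ ℕ} :
    p • a ≤ p • s + diagExp σ j ↔ a ≤ s := by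
  simp only [Finsupp.le_def, Finsupp.coe_add, Finsupp.coe_smul, Pi.add_apply, Pi.smul_apply,
    smul_eq_mul, diagExp_apply]
  refine forall_congr' fun i => ⟨fun h => ?_, fun h => by nlinarith⟩
  by_contra! h'
  nlinarith

theorem diagCartier_monomial_mul {p j : ℕ} (hj : j < p) (a : σ →₀ ℕ) (r : R)
    (f : MvPowerSeries σ R) :
    diagCartier R p j (monomial (p • a) r * f) = monomial a r * diagCartier R p j f := by
  ext s
  simp only [coeff_diagCartier, coeff_monomial_mul, nsmul_le_nsmul_add_diagExp_iff hj]
  split_ifs with has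
  · suffices p • s + diagExp σ j - p • a = p • (s - a) + diagExp σ j by rw [this]
    ext i
    have hi := Finsupp.le_def.1 has i
    have := Nat.mul_sub p (s i) (a i)
    have := Nat.mul_le_mul_left p hi
    simp only [Finsupp.coe_add, Finsupp.coe_smul, Finsupp.coe_tsub, Pi.add_apply, Pi.smul_apply,
      Pi.sub_apply, smul_eq_mul, diagExp_apply]
    omega
  · rfl

theorem diagCartier_expand_mul {p j : ℕ} (hj : j < p) (B : MvPolynomial σ R)
    (f : MvPowerSeries σ R) :
    diagCartier R p j ((MvPolynomial.expand p B : MvPowerSeries σ R) * f) =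
      B * diagCartier R p j f := by
  induction B using MvPolynomial.induction_on' with
  | monomial a r =>
    simp only [MvPolynomial.expand_monomial, MvPolynomial.coe_monomial,
      diagCartier_monomial_mul hj]
  | add B₁ B₂ h₁ h₂ => simp only [map_add, MvPolynomial.coe_add, add_mul, h₁, h₂]

theorem diagCartier_coe_eq_sum [DecidableEq σ] {p : ℕ} (hp : 0 < p) (j : ℕ) {D : ℕ}
    {W : MvPolynomial σ R} (hW : ∀ i, W.degreeOf i ≤ p * D) :
    diagCartier R p j (W : MvPowerSeries σ R) = ∑ γ ∈ Finset.Iic (diagExp σ D),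
      W.coeff (p • γ + diagExp σ j) • monomial γ (1 : R) := by
  ext s
  simp only [coeff_diagCartier, MvPolynomial.coeff_coe, map_sum, map_smul, coeff_monomial,
    smul_eq_mul, mul_ite, mul_one, mul_zero, Finset.sum_ite_eq, Finset.mem_Iic]
  split_ifs with hs
  · rfl
  · obtain ⟨i, hi⟩ : ∃ i, D < s i := by
      simpa [Finsupp.le_def] using hs
    by_contra hne
    have := MvPolynomial.degreeOf_le_iff.1 (hW i) _ (MvPolynomial.mem_support_iff.2 hne)
    simp only [Finsupp.coe_add, Finsupp.coe_smul, Pi.add_apply, Pi.smul_apply, smul_eq_mul,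
      diagExp_apply] at this
    nlinarith

end Diagonal

theorem map_inv {σ k l : Type*} [Field k] [Field l] (φ : k →+* l) (f : MvPowerSeries σ k) :
    map φ f⁻¹ = (map φ f)⁻¹ := by
  by_cases hf : constantCoeff f = 0
  · rw [inv_eq_zero.2 hf, map_zero, inv_eq_zero.2 (by rw [constantCoeff_map, hf, map_zero])]
  · rw [MvPowerSeries.eq_inv_iff_mul_eq_one
      (by rw [constantCoeff_map]; exact (_root_.map_ne_zero φ).2 hf), ← map_mul,
      MvPowerSeries.inv_mul_cancel _ hf, map_one]

section Rational

variable {σ κ : Type*} [Finite σ] [DecidableEq σ] [Field κ] (p : ℕ) [Fact p.Prime] [CharP κ p]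
  {Q : MvPolynomial σ κ} {D : ℕ}

variable (Q D) in
def boxDiagonals : Set (PowerSeries κ) :=
  (fun β => diag κ (monomial β 1 * (Q : MvPowerSeries σ κ)⁻¹)) '' ↑(Finset.Iic (diagExp σ D))

theorem boxDiagonals_finite : (boxDiagonals Q D).Finite :=
  (Finset.finite_toSet _).image _

theorem diagCartier_monomial_mul_inv (hQ : constantCoeff (Q : MvPowerSeries σ κ) ≠ 0)
    (hQD : ∀ i, Q.degreeOf i ≤ D)
    {β : σ →₀ ℕ} (hβ : β ≤ diagExp σ D) {j : ℕ} (hj : j < p) :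
    diagCartier κ p j (monomial β 1 * (Q : MvPowerSeries σ κ)⁻¹) =
      ∑ γ ∈ Finset.Iic (diagExp σ D),
        (MvPolynomial.monomial β 1 * Q ^ (p - 1)).coeff (p • γ + diagExp σ j) •
          map (frobenius κ p) (monomial γ 1 * (Q : MvPowerSeries σ κ)⁻¹) := by
  have hp := (Fact.out : p.Prime).pos
  set Q' := MvPolynomial.map (frobenius κ p) Q
  have hmapQ : map (frobenius κ p) (Q : MvPowerSeries σ κ) = Q' := by
    ext s
    simp [Q', coeff_map, MvPolynomial.coeff_map]
  have hQ'c : constantCoeff (Q' : MvPowerSeries σ κ) ≠ 0 := by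
    rw [← hmapQ, constantCoeff_map, frobenius_def]
    exact pow_ne_zero p hQ
  have hexpand : (MvPolynomial.expand p Q' : MvPowerSeries σ κ) = Q ^ p := by
    rw [← MvPolynomial.map_expand, MvPolynomial.map_frobenius_expand, MvPolynomial.coe_pow]
  have hW (i : σ) : (MvPolynomial.monomial β 1 * Q ^ (p - 1)).degreeOf i ≤ p * D := by
    simpa only [Nat.sub_add_cancel hp, diagExp_apply] using
      MvPolynomial.degreeOf_monomial_mul_pow_le (Finsupp.le_def.1 hβ i) (hQD i) (p - 1)
  have hkey : (Q' : MvPowerSeries σ κ) *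
        diagCartier κ p j (monomial β 1 * (Q : MvPowerSeries σ κ)⁻¹) =
      diagCartier κ p j (MvPolynomial.monomial β 1 * Q ^ (p - 1) : MvPolynomial σ κ) := by
    rw [← diagCartier_expand_mul hj, hexpand, ← pow_sub_one_mul hp.ne', MvPolynomial.coe_mul,
      MvPolynomial.coe_pow, MvPolynomial.coe_monomial]
    congr 1
    calc (Q : MvPowerSeries σ κ) ^ (p - 1) * (Q : MvPowerSeries σ κ) *
          (monomial β 1 * (Q : MvPowerSeries σ κ)⁻¹)
        = monomial β 1 * (Q : MvPowerSeries σ κ) ^ (p - 1) *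
            ((Q : MvPowerSeries σ κ) * (Q : MvPowerSeries σ κ)⁻¹) := by ring
      _ = _ := by rw [MvPowerSeries.mul_inv_cancel _ hQ, mul_one]
  rw [diagCartier_coe_eq_sum hp j hW] at hkey
  rw [← one_mul (diagCartier κ p j _), ← MvPowerSeries.inv_mul_cancel _ hQ'c, mul_assoc, hkey,
    Finset.mul_sum]
  refine Finset.sum_congr rfl fun γ _ => ?_
  rw [map_mul, map_inv, hmapQ, map_monomial, map_one (frobenius κ p), mul_smul_comm,
    mul_comm (monomial γ 1)]

theorem boxDiagonals_subset_span_image_pow (hQ : constantCoeff (Q : MvPowerSeries σ κ) ≠ 0)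
    (hQD : ∀ i, Q.degreeOf i ≤ D) :
    boxDiagonals Q D ⊆ span κ[X] ((· ^ p) '' boxDiagonals Q D) := by
  have hp := (Fact.out : p.Prime).pos
  rintro _ ⟨β, hβ, rfl⟩
  beta_reduce
  rw [SetLike.mem_coe, diag_eq_sum_X_pow_mul_expand p hp.ne']
  refine sum_mem fun j hj => ?_
  rw [diagCartier_monomial_mul_inv p hQ hQD (Finset.mem_Iic.1 hβ) (Finset.mem_range.1 hj),
    map_sum, map_sum, Finset.mul_sum]
  refine sum_mem fun γ hγ => ?_
  rw [map_smul, map_smul, expand_diag_map_frobenius]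
  set c := (MvPolynomial.monomial β 1 * Q ^ (p - 1)).coeff (p • γ + diagExp σ j)
  have hsmul (y : PowerSeries κ) :
      PowerSeries.X ^ j * (c • y) = (Polynomial.X ^ j * Polynomial.C c : κ[X]) • y := by
    rw [PowerSeries.smul_eq_C_mul, Algebra.smul_def]
    change _ = ((Polynomial.X ^ j * Polynomial.C c : κ[X]) : PowerSeries κ) * y
    simp only [Polynomial.coe_mul, Polynomial.coe_pow, Polynomial.coe_X, Polynomial.coe_C,
      mul_assoc]
  rw [hsmul]
  exact smul_mem _ _ (subset_span ⟨_, ⟨γ, hγ, rfl⟩, rfl⟩)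

theorem diag_mem_span_boxDiagonals (hQ : constantCoeff (Q : MvPowerSeries σ κ) ≠ 0)
    {P : MvPolynomial σ κ} (hPD : ∀ i, P.degreeOf i ≤ D) {f : MvPowerSeries σ κ}
    (hf : (Q : MvPowerSeries σ κ) * f = P) :
    diag κ f ∈ span κ[X] (boxDiagonals Q D) := by
  have hP : (P : MvPowerSeries σ κ) = ∑ β ∈ P.support, P.coeff β • monomial β 1 := by
    ext s
    simp only [MvPolynomial.coeff_coe, map_sum, map_smul, coeff_monomial, smul_eq_mul, mul_ite,
      mul_one, mul_zero, Finset.sum_ite_eq]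
    split_ifs with hs
    · rfl
    · exact MvPolynomial.notMem_support_iff.1 hs
  have hfP : f = (Q : MvPowerSeries σ κ)⁻¹ * P := by
    rw [← hf, ← mul_assoc, MvPowerSeries.inv_mul_cancel _ hQ, one_mul]
  rw [hfP, hP, Finset.mul_sum, map_sum]
  refine sum_mem fun β hβ => ?_
  rw [mul_smul_comm, map_smul, mul_comm]
  refine smul_of_tower_mem _ _ (subset_span ⟨β, ?_, rfl⟩)
  exact Finset.mem_Iic.2 (Finsupp.le_def.2 fun i =>
    (MvPolynomial.degreeOf_le_iff.1 (hPD i) β hβ).trans_eq (diagExp_apply D i).symm)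

end Rational

end MvPowerSeries

end

theorem furstenberg_diagonal_algebraic_general (κ : Type*) [Field κ]
    (p : ℕ) (hp : 0 < p) [CharP κ p]
    (m : ℕ) (f : MvPowerSeries (Fin m) κ)
    (P Q : MvPolynomial (Fin m) κ)
    (hQ0 : MvPolynomial.eval (0 : Fin m → κ) Q ≠ 0)
    (hrat : (Q : MvPowerSeries (Fin m) κ) * f = (P : MvPowerSeries (Fin m) κ)) :
    ∃ G : Polynomial (Polynomial κ), G ≠ 0 ∧
      Polynomial.eval₂ Polynomial.coeToPowerSeries.ringHom
        (PowerSeries.mk fun n =>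
          MvPowerSeries.coeff (R := κ) (Finsupp.equivFunOnFinite.symm fun _ => n) f)
        G = 0 := by
  have : NeZero p := ⟨hp.ne'⟩
  have : Fact p.Prime := CharP.char_is_prime_of_pos κ p
  have : CharP (PowerSeries κ) p := charP_of_injective_algebraMap (algebraMap κ _).injective p
  have hQ : MvPowerSeries.constantCoeff (Q : MvPowerSeries (Fin m) κ) ≠ 0 := by
    rwa [← MvPowerSeries.coeff_zero_eq_constantCoeff_apply, MvPolynomial.coeff_coe,
      ← MvPolynomial.constantCoeff_eq, ← MvPolynomial.eval_zero]
  have hPD (i) : P.degreeOf i ≤ P.totalDegree ⊔ Q.totalDegree :=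
    (MvPolynomial.degreeOf_le_totalDegree P i).trans le_sup_left
  have hQD (i) : Q.degreeOf i ≤ P.totalDegree ⊔ Q.totalDegree :=
    (MvPolynomial.degreeOf_le_totalDegree Q i).trans le_sup_right
  have hs := MvPowerSeries.boxDiagonals_subset_span_image_pow p hQ hQD
  have hf := MvPowerSeries.diag_mem_span_boxDiagonals hQ hPD hrat
  obtain ⟨G, hG, hGf⟩ := isAlgebraic_of_mem_span_of_subset_span_image_pow p
    MvPowerSeries.boxDiagonals_finite hs hf
  exact ⟨G, hG, hGf⟩

/-- **Furstenberg's theorem** (Theorem 1 of the paper).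
Over a field `κ` of positive characteristic `p`, the diagonal of an
`m`-variable formal power series representing a rational function is
algebraic over `κ(t)`.  The diagonal of `f = ∑ a_{n₁,…,n_m} x₁^{n₁}⋯x_m^{n_m}`
is `∑ a_{n,…,n} tⁿ`, and algebraicity is witnessed by a nonzero polynomial
`G(t,Y)` (encoded as an element of `(κ[t])[Y]`) vanishing at the diagonal. -/
theorem furstenberg_diagonal_algebraic (κ : Type*) [Field κ]
    (p : ℕ) (hp : 0 < p) [CharP κ p]
    (m : ℕ) (f : MvPowerSeries (Fin m) κ)
    (P Q : MvPolynomial (Fin m) κ) (hQ : Q ≠ 0)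
    (hQ0 : MvPolynomial.eval (0 : Fin m → κ) Q ≠ 0)
    (hrat : (Q : MvPowerSeries (Fin m) κ) * f = (P : MvPowerSeries (Fin m) κ)) :
    ∃ G : Polynomial (Polynomial κ), G ≠ 0 ∧
      Polynomial.eval₂ Polynomial.coeToPowerSeries.ringHom
        (PowerSeries.mk fun n =>
          MvPowerSeries.coeff (R := κ) (Finsupp.equivFunOnFinite.symm fun _ => n) f)
        G = 0 :=
  furstenberg_diagonal_algebraic_general κ p hp m f P Q hQ0 hrat
end

section
/- Let p be a prime, s ≥ 1 an integer, and q = p^s. For any sequence u : ℕ → A taking values in any type A, the p-kernel of u, namely { n ↦ u(n·p^k + r) : k ∈ ℕ, 0 ≤ r < p^k }, is finite if and only if the q-kernel of u, namely { n ↦ u(n·q^k + r) : k ∈ ℕ, 0 ≤ r < q^k }, is finite. -/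
/-!
Every power `b ^ (s * m)` is a power of `b ^ s`, so the `b ^ s`-kernel lies in the `b`-kernel.
Conversely, write `k = s * m + j` with `j < s` and split `r < b ^ k` as `r = b ^ (s * m) * t + r'`
with `r' < b ^ (s * m)` and `t < b ^ j`; then `u (n * b ^ k + r) = w (n * b ^ j + t)` for the
element `w = fun n => u (n * (b ^ s) ^ m + r')` of the `b ^ s`-kernel. Hence the `b`-kernel is
covered by finitely many images of the `b ^ s`-kernel.
-/

def seqKernel {A : Type*} (b : ℕ) (u : ℕ → A) : Set (ℕ → A) :=
  {v | ∃ k r : ℕ, r < b ^ k ∧ v = fun n => u (n * b ^ k + r)}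

namespace seqKernel

variable {A : Type*} {b : ℕ} {u : ℕ → A}

theorem pow_subset (s : ℕ) : seqKernel (b ^ s) u ⊆ seqKernel b u := by
  rintro v ⟨k, r, hr, rfl⟩
  exact ⟨s * k, r, by rwa [pow_mul], by rw [pow_mul]⟩

theorem exists_eq_comp_of_mem {s : ℕ} (hs : 0 < s) {v : ℕ → A} (hv : v ∈ seqKernel b u) :
    ∃ j < s, ∃ t < b ^ j, ∃ w ∈ seqKernel (b ^ s) u, v = fun n => w (n * b ^ j + t) := by
  obtain ⟨k, r, hr, rfl⟩ := hv
  obtain ⟨m, j, hj, rfl⟩ : ∃ m, ∃ j < s, k = s * m + j :=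
    ⟨k / s, k % s, Nat.mod_lt k hs, (Nat.div_add_mod k s).symm⟩
  rw [pow_add] at hr
  have hpos : 0 < b ^ (s * m) := Nat.pos_of_ne_zero fun h => by simp [h] at hr
  refine ⟨j, hj, r / b ^ (s * m), Nat.div_lt_of_lt_mul hr,
    fun n => u (n * (b ^ s) ^ m + r % b ^ (s * m)),
    ⟨m, r % b ^ (s * m), by rw [← pow_mul]; exact Nat.mod_lt r hpos, rfl⟩, ?_⟩
  funext n
  conv_lhs => rw [← Nat.div_add_mod r (b ^ (s * m))]
  rw [← pow_mul]
  ring_nf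

theorem subset_biUnion_image {s : ℕ} (hs : 0 < s) :
    seqKernel b u ⊆ ⋃ j ∈ Finset.range s, ⋃ t ∈ Finset.range (b ^ j),
      (fun (w : ℕ → A) n => w (n * b ^ j + t)) '' seqKernel (b ^ s) u := by
  intro v hv
  obtain ⟨j, hj, t, ht, w, hw, rfl⟩ := exists_eq_comp_of_mem hs hv
  simp only [Set.mem_iUnion, Finset.mem_range]
  exact ⟨j, hj, t, ht, w, hw, rfl⟩

theorem finite_of_finite_pow {s : ℕ} (hs : 0 < s) (h : (seqKernel (b ^ s) u).Finite) :
    (seqKernel b u).Finite :=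
  ((Finset.range s).finite_toSet.biUnion fun j _ =>
    (Finset.range (b ^ j)).finite_toSet.biUnion fun _ _ => h.image _).subset
      (subset_biUnion_image hs)

theorem finite_pow_iff {s : ℕ} (hs : 0 < s) :
    (seqKernel (b ^ s) u).Finite ↔ (seqKernel b u).Finite :=
  ⟨finite_of_finite_pow hs, fun h => h.subset (pow_subset s)⟩

end seqKernel

theorem pKernel_finite_iff_qKernel_finite_general
    (p : ℕ) (s : ℕ) (hs : 1 ≤ s) (q : ℕ) (hq : q = p ^ s)
    (A : Type*) (u : ℕ → A) :
    {v : ℕ → A | ∃ k r : ℕ, r < p ^ k ∧ v = fun n => u (n * p ^ k + r)}.Finite ↔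
    {v : ℕ → A | ∃ k r : ℕ, r < q ^ k ∧ v = fun n => u (n * q ^ k + r)}.Finite := by
  subst hq
  exact (seqKernel.finite_pow_iff hs).symm

/-- The `p`-kernel of a sequence is finite if and only if its `q`-kernel is
finite, for `q = p^s` a power of the prime `p` (final remark in the proof of
Proposition 2 of the paper). -/
theorem pKernel_finite_iff_qKernel_finite
    (p : ℕ) (hp : p.Prime) (s : ℕ) (hs : 1 ≤ s) (q : ℕ) (hq : q = p ^ s)
    (A : Type*) (u : ℕ → A) :
    {v : ℕ → A | ∃ k r : ℕ, r < p ^ k ∧ v = fun n => u (n * p ^ k + r)}.Finite ↔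
    {v : ℕ → A | ∃ k r : ℕ, r < q ^ k ∧ v = fun n => u (n * q ^ k + r)}.Finite :=
  pKernel_finite_iff_qKernel_finite_general p s hs q hq A u
end

section
/- Let p be a prime and let u : ℕ² → A be a double sequence with values in any type A. If the p-kernel of u, namely the set of double sequences { (m,n) ↦ u(m·p^k + r, n·p^k + s) : k ∈ ℕ, 0 ≤ r, s < p^k }, is finite, then the p-kernel of the diagonal sequence n ↦ u(n,n), namely { n ↦ u(n·p^k + r, n·p^k + r) : k ∈ ℕ, 0 ≤ r < p^k }, is also finite. -/
theorem diagonal_kernel_finite_of_kernel_finite_general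
    (p : ℕ) (A : Type*) (u : ℕ → ℕ → A)
    (hker : {v : ℕ → ℕ → A | ∃ k r s : ℕ, r < p ^ k ∧ s < p ^ k ∧
        v = fun m n => u (m * p ^ k + r) (n * p ^ k + s)}.Finite) :
    {w : ℕ → A | ∃ k r : ℕ, r < p ^ k ∧
        w = fun n => u (n * p ^ k + r) (n * p ^ k + r)}.Finite := by
  refine (hker.image fun v n => v n n).subset ?_
  rintro w ⟨k, r, hr, rfl⟩
  exact ⟨_, ⟨k, r, r, hr, hr, rfl⟩, rfl⟩

/-- If the `p`-kernel of a double sequence `u : ℕ² → A` is finite, then the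
`p`-kernel of its diagonal sequence `n ↦ u(n,n)` is finite (used in the proof
of Corollary 1 of the paper). -/
theorem diagonal_kernel_finite_of_kernel_finite
    (p : ℕ) (hp : p.Prime) (A : Type*) (u : ℕ → ℕ → A)
    (hker : {v : ℕ → ℕ → A | ∃ k r s : ℕ, r < p ^ k ∧ s < p ^ k ∧
        v = fun m n => u (m * p ^ k + r) (n * p ^ k + s)}.Finite) :
    {w : ℕ → A | ∃ k r : ℕ, r < p ^ k ∧
        w = fun n => u (n * p ^ k + r) (n * p ^ k + r)}.Finite :=
  diagonal_kernel_finite_of_kernel_finite_general p A u hker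
end

section
/- Let 𝔽_q be a finite field with q elements and let f = Σ_{n≥0} u_n Xⁿ ∈ 𝔽_q[[X]] be a power series whose q-kernel { n ↦ u(n·q^k + r) : k ∈ ℕ, 0 ≤ r < q^k } is finite, of cardinality d. Then f, f^q, f^{q²}, …, f^{q^d} are linearly dependent over 𝔽_q(X): there exist polynomials B₀, B₁, …, B_d ∈ 𝔽_q[X], not all zero, such that Σ_{i=0}^{d} Bᵢ(X) · f(X)^{qⁱ} = 0 in 𝔽_q[[X]]. -/
/-!
Let `q = #F`. As `a ^ q = a` on `F`, the `q`-th power of a power series `g(X)` is `g(X ^ q)`, so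
every `g = ∑ vₙ Xⁿ` splits as `g = ∑_{r < q} X ^ r * g_r ^ q` with `g_r = ∑ v(nq + r) Xⁿ`.
Raising this to the power `q ^ k` puts the `q ^ k`-th powers of the series of the `q`-kernel
into the `F[X]`-span of their `q ^ (k + 1)`-th powers, the kernel being closed under
`v ↦ (n ↦ v(nq + r))`. Hence `f, f ^ q, …, f ^ q ^ d` all lie in an `F[X]`-module generated by
`d` elements, and over a commutative ring `d + 1` such elements are linearly dependent; working
over `F[X]` rather than `F(X)` gives the polynomial coefficients without clearing denominators.
-/

open PowerSeries Polynomial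

namespace PowerSeries

theorem mk_eq_sum_X_pow_mul_expand {R : Type*} [CommRing R] (q : ℕ) (hq : q ≠ 0) (v : ℕ → R) :
    mk v = ∑ r ∈ Finset.range q, X ^ r * expand q hq (mk fun n => v (n * q + r)) := by
  ext m
  rw [coeff_mk, map_sum, Finset.sum_eq_single (m % q)]
  · rw [coeff_X_pow_mul', if_pos (Nat.mod_le m q), coeff_expand, if_pos (Nat.dvd_sub_mod m),
      coeff_mk, Nat.div_mul_cancel (Nat.dvd_sub_mod m), Nat.sub_add_cancel (Nat.mod_le m q)]
  · intro r hr hne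
    rw [coeff_X_pow_mul']
    split_ifs with hrm
    · rw [coeff_expand, if_neg]
      rintro ⟨t, ht⟩
      apply hne
      rw [show m = q * t + r by omega, Nat.mul_add_mod, Nat.mod_eq_of_lt (Finset.mem_range.1 hr)]
    · rfl
  · simp [Nat.mod_lt, Nat.pos_of_ne_zero hq]

variable {F : Type*} [Field F] [Fintype F]

theorem pow_card_eq_expand (f : F⟦X⟧) :
    f ^ Fintype.card F = expand (Fintype.card F) Fintype.card_ne_zero f := by
  obtain ⟨p, _, n, hp, hcard⟩ := FiniteField.card' F
  have : Fact p.Prime := ⟨hp⟩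
  have hid : iterateFrobenius F p n = RingHom.id F := by
    ext x
    rw [iterateFrobenius_def, ← hcard, FiniteField.pow_card, RingHom.id_apply]
  have h := MvPowerSeries.map_iterateFrobenius_expand (σ := Unit) p hp.ne_zero f n
  rw [hid, MvPowerSeries.map_id, RingHom.id_apply] at h
  simp only [hcard]
  exact h.symm

theorem mk_eq_sum_X_pow_mul_pow_card (v : ℕ → F) :
    mk v = ∑ r ∈ Finset.range (Fintype.card F),
      X ^ r * (mk fun n => v (n * Fintype.card F + r)) ^ Fintype.card F := by
  simp only [pow_card_eq_expand]
  exact mk_eq_sum_X_pow_mul_expand _ _ v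

theorem mk_pow_card_pow_eq_sum (v : ℕ → F) (k : ℕ) :
    mk v ^ Fintype.card F ^ k = ∑ r ∈ Finset.range (Fintype.card F),
      X ^ (r * Fintype.card F ^ k) *
        (mk fun n => v (n * Fintype.card F + r)) ^ Fintype.card F ^ (k + 1) := by
  have hfrob : ∀ x : F⟦X⟧, (FiniteField.frobeniusAlgHom F F⟦X⟧ ^ k) x = x ^ Fintype.card F ^ k :=
    fun x => by rw [AlgHom.coe_pow, FiniteField.coe_frobeniusAlgHom, pow_iterate]
  rw [← hfrob, mk_eq_sum_X_pow_mul_pow_card, map_sum]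
  simp only [hfrob, mul_pow, ← pow_mul, ← pow_succ']

end PowerSeries

theorem Polynomial.smul_powerSeries_eq_coe_mul {R : Type*} [CommSemiring R] (p : R[X])
    (f : PowerSeries R) : p • f = (p : PowerSeries R) * f := by
  rw [Algebra.smul_def, PowerSeries.algebraMap_apply', Algebra.algebraMap_self, PowerSeries.map_id]
  rfl

theorem LinearIndependent.card_le_ncard_of_subset_span {R M ι : Type*} [Semiring R]
    [StrongRankCondition R] [AddCommMonoid M] [Module R M] [Fintype ι] {v : ι → M}
    (hv : LinearIndependent R v) {w : Set M} (hw : w.Finite)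
    (hvw : Set.range v ⊆ Submodule.span R w) : Fintype.card ι ≤ w.ncard := by
  have := hw.fintype
  rw [← Nat.card_coe_set_eq, Nat.card_eq_fintype_card]
  exact linearIndependent_le_span_aux' v hv w hvw

def qKernel {α : Type*} (q : ℕ) (u : ℕ → α) : Set (ℕ → α) :=
  {v | ∃ k r : ℕ, r < q ^ k ∧ v = fun n => u (n * q ^ k + r)}

section qKernel

variable {α : Type*} {q : ℕ} {u : ℕ → α}

theorem self_mem_qKernel : u ∈ qKernel q u :=
  ⟨0, 0, by simp, by simp⟩

theorem decimate_mem_qKernel {v : ℕ → α} (hv : v ∈ qKernel q u) {r : ℕ} (hr : r < q) :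
    (fun n => v (n * q + r)) ∈ qKernel q u := by
  obtain ⟨k, r₀, hr₀, rfl⟩ := hv
  refine ⟨k + 1, r * q ^ k + r₀, ?_, ?_⟩
  · calc r * q ^ k + r₀ < (r + 1) * q ^ k := by linarith
      _ ≤ q ^ (k + 1) := by rw [pow_succ']; exact Nat.mul_le_mul_right _ hr
  · funext n
    ring_nf

end qKernel

theorem span_image_mk_pow_card_pow_mono {F : Type*} [Field F] [Fintype F] {S : Set (ℕ → F)}
    (hS : ∀ v ∈ S, ∀ r < Fintype.card F, (fun n => v (n * Fintype.card F + r)) ∈ S) :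
    Monotone fun k => Submodule.span F[X] ((fun v => mk v ^ Fintype.card F ^ k) '' S) := by
  refine monotone_nat_of_le_succ fun k => Submodule.span_le.2 ?_
  rintro _ ⟨v, hv, rfl⟩
  rw [SetLike.mem_coe]
  dsimp only
  rw [mk_pow_card_pow_eq_sum]
  refine Submodule.sum_mem _ fun r hr => ?_
  rw [← Polynomial.coe_X, ← Polynomial.coe_pow, ← Polynomial.smul_powerSeries_eq_coe_mul]
  exact Submodule.smul_mem _ _
    (Submodule.subset_span ⟨_, hS v hv r (Finset.mem_range.1 hr), rfl⟩)

/-- **Section 4.1 of the paper.**  If the `q`-kernel of the coefficient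
sequence `u` of `f = ∑ u_n Xⁿ ∈ 𝔽_q[[X]]` is finite of cardinality `d`, then
`f, f^q, f^{q²}, …, f^{q^d}` are linearly dependent over `𝔽_q(X)`: there are
polynomials `B₀, …, B_d ∈ 𝔽_q[X]`, not all zero, with
`∑_{i=0}^{d} Bᵢ(X)·f^{qⁱ} = 0`. -/
theorem linear_relation_of_kernel_finite
    (F : Type*) [Field F] [Fintype F] (q : ℕ) (hq : Fintype.card F = q)
    (u : ℕ → F) (d : ℕ)
    (hfin : {v : ℕ → F | ∃ k r : ℕ, r < q ^ k ∧
        v = fun n => u (n * q ^ k + r)}.Finite)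
    (hcard : {v : ℕ → F | ∃ k r : ℕ, r < q ^ k ∧
        v = fun n => u (n * q ^ k + r)}.ncard = d) :
    ∃ B : Fin (d + 1) → Polynomial F, B ≠ 0 ∧
      ∑ i : Fin (d + 1),
        ((B i : PowerSeries F) * (PowerSeries.mk u) ^ q ^ (i : ℕ)) = 0 := by
  subst hq
  change (qKernel _ u).Finite at hfin
  change (qKernel _ u).ncard = d at hcard
  have hmem : ∀ i : Fin (d + 1), mk u ^ Fintype.card F ^ (i : ℕ) ∈
      Submodule.span F[X] ((fun v => mk v ^ Fintype.card F ^ d) '' qKernel _ u) := fun i =>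
    span_image_mk_pow_card_pow_mono (fun _ hv _ hr => decimate_mem_qKernel hv hr) i.is_le
      (Submodule.subset_span ⟨u, self_mem_qKernel, rfl⟩)
  have hdep : ¬ LinearIndependent F[X] fun i : Fin (d + 1) => mk u ^ Fintype.card F ^ (i : ℕ) := by
    intro hli
    have hspan := hli.card_le_ncard_of_subset_span (hfin.image _) (Set.range_subset_iff.2 hmem)
    have himage := Set.ncard_image_le (f := fun v => mk v ^ Fintype.card F ^ d) hfin
    rw [Fintype.card_fin] at hspan
    omega
  obtain ⟨B, hB, i, hi⟩ := Fintype.not_linearIndependent_iff.1 hdep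
  refine ⟨B, fun h => hi (congrFun h i), ?_⟩
  simpa only [Polynomial.smul_powerSeries_eq_coe_mul] using hB
end

section
/- Let t : ℕ → 𝔽₂ be the Thue–Morse sequence, where t_n is the parity of the number of 1's in the binary expansion of n, and let f = Σ_{n≥0} t_n Xⁿ ∈ 𝔽₂[[X]]. Then (1+X)³ f² + (1+X)² f + X = 0 in 𝔽₂[[X]]. -/
/-!
Over `𝔽₂` squaring a power series substitutes `X²` for `X`, so `f² = f(X²)`. Splitting `f` into
its even and odd parts, `t (2n) = t n` and `t (2n+1) = t n + 1` give
`f = (1 + X) f(X²) + X/(1 + X²)`. Multiplying by `(1 + X)² = 1 + X²` yields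
`(1 + X)² f = (1 + X)³ f² + X`, which is the claim in characteristic two.
-/

open PowerSeries

theorem Nat.digits_sum_add_mul {b r : ℕ} (hb : 1 < b) (hr : r < b) (n : ℕ) :
    (b.digits (r + b * n)).sum = r + (b.digits n).sum := by
  by_cases h : r = 0 ∧ n = 0
  · obtain ⟨rfl, rfl⟩ := h
    simp
  · rw [Nat.digits_add b hb r n hr (by tauto), List.sum_cons]

namespace PowerSeries

instance instCharP {R : Type*} [Semiring R] (p : ℕ) [CharP R p] : CharP R⟦X⟧ p :=
  charP_of_injective_ringHom C_injective p

theorem pow_eq_expand_zmod (p : ℕ) [Fact p.Prime] (φ : (ZMod p)⟦X⟧) :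
    φ ^ p = expand p (NeZero.ne p) φ := by
  rw [← MvPowerSeries.map_frobenius_expand p (NeZero.ne p), ZMod.frobenius_zmod,
    MvPowerSeries.map_id]
  rfl

theorem eq_expand_two_add_X_mul_expand_two {R : Type*} [CommRing R] (φ : R⟦X⟧) :
    φ = expand 2 two_ne_zero (mk fun n => coeff (2 * n) φ) +
      X * expand 2 two_ne_zero (mk fun n => coeff (2 * n + 1) φ) := by
  ext n
  rcases n with _ | n
  · simp
  · obtain ⟨k, rfl | rfl⟩ := Nat.even_or_odd' n
    · simp [coeff_expand, coeff_succ_X_mul]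
    · simp [coeff_expand, coeff_succ_X_mul, Nat.dvd_add_right]
      rw [show 2 * ((2 * k + 1 + 1) / 2) = 2 * k + 1 + 1 by omega]

theorem one_add_X_mul_mk_one {R : Type*} [CommRing R] [CharP R 2] :
    (1 + X : R⟦X⟧) * mk 1 = 1 := by
  rw [← CharTwo.sub_eq_add, mul_comm, mk_one_mul_one_sub_eq_one]

end PowerSeries

def thueMorse (n : ℕ) : ZMod 2 := ((Nat.digits 2 n).sum : ZMod 2)

theorem thueMorse_two_mul (n : ℕ) : thueMorse (2 * n) = thueMorse n := by
  simpa [thueMorse] using congrArg (Nat.cast : ℕ → ZMod 2)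
    (Nat.digits_sum_add_mul one_lt_two two_pos n)

theorem thueMorse_two_mul_add_one (n : ℕ) : thueMorse (2 * n + 1) = thueMorse n + 1 := by
  rw [thueMorse, add_comm, Nat.digits_sum_add_mul one_lt_two one_lt_two, Nat.cast_add,
    Nat.cast_one, add_comm, thueMorse]

theorem mk_thueMorse_eq :
    mk thueMorse = (1 + X) * expand 2 two_ne_zero (mk thueMorse) +
      X * expand 2 two_ne_zero (mk 1) := by
  have hodd : mk (fun n => thueMorse n + 1) = mk thueMorse + mk 1 := by
    ext
    simp
  conv_lhs => rw [eq_expand_two_add_X_mul_expand_two (mk thueMorse)]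
  simp only [coeff_mk, thueMorse_two_mul, thueMorse_two_mul_add_one, hodd, map_add]
  ring

theorem one_add_X_sq_mul_mk_thueMorse :
    (1 + X) ^ 2 * mk thueMorse = (1 + X) ^ 3 * mk thueMorse ^ 2 + X := by
  calc (1 + X) ^ 2 * mk thueMorse
      = expand 2 two_ne_zero (1 + X) *
          ((1 + X) * expand 2 two_ne_zero (mk thueMorse) + X * expand 2 two_ne_zero (mk 1)) := by
        rw [← pow_eq_expand_zmod, ← mk_thueMorse_eq]
    _ = (1 + X) ^ 3 * expand 2 two_ne_zero (mk thueMorse) +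
          X * expand 2 two_ne_zero ((1 + X) * mk 1) := by
        rw [map_mul, ← pow_eq_expand_zmod]
        ring
    _ = (1 + X) ^ 3 * mk thueMorse ^ 2 + X := by
        rw [one_add_X_mul_mk_one, map_one, ← pow_eq_expand_zmod, mul_one]

/-- **Example 1 of the paper.**  The generating series `f = ∑ t_n Xⁿ` of the
Thue–Morse sequence `t` over `𝔽₂` (where `t_n` is the parity of the number of
`1`'s in the binary expansion of `n`) satisfies
`(1+X)³ f² + (1+X)² f + X = 0` in `𝔽₂[[X]]`. -/
theorem thue_morse_algebraic
    (t : ℕ → ZMod 2) (ht : ∀ n, t n = ((Nat.digits 2 n).sum : ZMod 2))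
    (f : PowerSeries (ZMod 2)) (hf : f = PowerSeries.mk t) :
    (1 + PowerSeries.X) ^ 3 * f ^ 2 + (1 + PowerSeries.X) ^ 2 * f
        + PowerSeries.X = 0 := by
  obtain rfl : t = thueMorse := funext ht
  subst hf
  linear_combination one_add_X_sq_mul_mk_thueMorse +
    ((1 + X) ^ 3 * mk thueMorse ^ 2 + X) * CharTwo.two_eq_zero (R := (ZMod 2)⟦X⟧)
end
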